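/- arXiv:2603.09711 — 4 statements merged into one kernel-verified Lean document; each statement's English description precedes it below -/
import Mathlib

section
/- Let G be a Polish, locally Roelcke precompact group. Suppose G acts continuously, isometrically, and coarsely properly on complete metric spaces X and Y such that X ⫽ G and Y ⫽ G are proper metric spaces. Then the diagonal action of G on X × Y, equipped with the supremum metric d((x,y),(x',y')) = max(d(x,x'), d(y,y')), is continuous, isometric, and coarsely proper, and (X × Y) ⫽ G is a proper metric space. -/
set_option linter.unusedSectionVars false

open Metric MulAction Filter Set Topology Pointwise

section OrbitQuotient

variable (G : Type*) {X : Type*} [Group G] [PseudoMetricSpace X] [MulAction G X]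

/-- The distance from a point `x` to the orbit of `y` under the group `G`. -/
noncomputable def orbDist (x y : X) : ℝ := ⨅ g : G, dist x (g • y)

theorem orbDist_nonneg (x y : X) : 0 ≤ orbDist G x y :=
  Real.iInf_nonneg fun _ => dist_nonneg

theorem orbDist_le (x y : X) (g : G) : orbDist G x y ≤ dist x (g • y) :=
  ciInf_le ⟨0, by rintro r ⟨g, rfl⟩; exact dist_nonneg⟩ g

theorem orbit_nonempty (y : X) : (MulAction.orbit G y).Nonempty :=
  ⟨y, MulAction.mem_orbit_self y⟩

theorem orbDist_eq_infDist (x y : X) : orbDist G x y = Metric.infDist x (MulAction.orbit G y) := by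
  haveI : Nonempty (MulAction.orbit G y) := (orbit_nonempty G y).to_subtype
  rw [Metric.infDist_eq_iInf]
  apply le_antisymm
  · refine le_ciInf fun z => ?_
    obtain ⟨g, hg⟩ := z.2
    have hg' : g • y = (z : X) := hg
    calc orbDist G x y ≤ dist x (g • y) := orbDist_le G x y g
      _ = dist x z := by rw [hg']
  · refine le_ciInf fun g => ?_
    exact ciInf_le ⟨0, by rintro r ⟨z, rfl⟩; exact dist_nonneg⟩
      (⟨g • y, MulAction.mem_orbit y g⟩ : MulAction.orbit G y)

variable [IsIsometricSMul G X]

theorem orbDist_self (x : X) : orbDist G x x = 0 :=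
  le_antisymm (by simpa using orbDist_le G x x 1) (orbDist_nonneg G x x)

theorem orbDist_comm (x y : X) : orbDist G x y = orbDist G y x := by
  have key : ∀ u v : X, orbDist G v u ≤ orbDist G u v := by
    intro u v
    refine le_ciInf fun g => ?_
    calc orbDist G v u ≤ dist v (g⁻¹ • u) := orbDist_le G v u g⁻¹
      _ = dist (g • v) (g • g⁻¹ • u) := (dist_smul g v _).symm
      _ = dist u (g • v) := by rw [smul_inv_smul, dist_comm]
  exact le_antisymm (key y x) (key x y)

theorem orbDist_triangle (x y z : X) : orbDist G x z ≤ orbDist G x y + orbDist G y z := by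
  refine le_of_forall_pos_le_add fun ε hε => ?_
  obtain ⟨g, hg⟩ : ∃ g : G, dist x (g • y) < orbDist G x y + ε / 2 :=
    exists_lt_of_ciInf_lt (by change orbDist G x y < _; linarith)
  obtain ⟨h, hh⟩ : ∃ h : G, dist y (h • z) < orbDist G y z + ε / 2 :=
    exists_lt_of_ciInf_lt (by change orbDist G y z < _; linarith)
  calc orbDist G x z ≤ dist x ((g * h) • z) := orbDist_le G x z (g * h)
    _ ≤ dist x (g • y) + dist (g • y) ((g * h) • z) := dist_triangle _ _ _
    _ = dist x (g • y) + dist y (h • z) := by rw [mul_smul, dist_smul]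
    _ ≤ orbDist G x y + ε / 2 + (orbDist G y z + ε / 2) := by linarith
    _ = orbDist G x y + orbDist G y z + ε := by ring

theorem closure_orbit_mono {u v : X} (hu : u ∈ closure (MulAction.orbit G v)) :
    closure (MulAction.orbit G u) ⊆ closure (MulAction.orbit G v) := by
  refine closure_minimal ?_ isClosed_closure
  rintro _ ⟨g, rfl⟩
  have : g • u ∈ g • closure (MulAction.orbit G v) := Set.smul_mem_smul_set hu
  rwa [← closure_smul, MulAction.smul_orbit] at this

theorem closure_orbit_eq_of_orbDist_eq_zero {x y : X} (h : orbDist G x y = 0) :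
    closure (MulAction.orbit G x) = closure (MulAction.orbit G y) := by
  have hx : x ∈ closure (MulAction.orbit G y) := by
    rw [Metric.mem_closure_iff_infDist_zero (orbit_nonempty G y), ← orbDist_eq_infDist]
    exact h
  have hy : y ∈ closure (MulAction.orbit G x) := by
    rw [Metric.mem_closure_iff_infDist_zero (orbit_nonempty G x), ← orbDist_eq_infDist,
      ← orbDist_comm]
    exact h
  exact le_antisymm (closure_orbit_mono G hx) (closure_orbit_mono G hy)

variable (X) in
/-- Points of `X` are equivalent when they have the same orbit closure. -/
def orbSetoid : Setoid X :=
  ⟨fun x y => closure (MulAction.orbit G x) = closure (MulAction.orbit G y),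
    fun _ => rfl, Eq.symm, Eq.trans⟩

variable (X) in
/-- The space `X ⫽ G` of orbit closures. -/
abbrev OrbQuot : Type _ := Quotient (orbSetoid G X)

/-- The orbit closure of a point, as an element of `X ⫽ G`. -/
abbrev OrbQuot.mk (x : X) : OrbQuot G X := Quotient.mk (orbSetoid G X) x

theorem orbDist_congr {x x' y : X}
    (hx : closure (MulAction.orbit G x) = closure (MulAction.orbit G x')) :
    orbDist G x y = orbDist G x' y := by
  have key : ∀ u u' v : X, u ∈ closure (MulAction.orbit G u') →
      orbDist G u' v ≤ orbDist G u v := by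
    intro u u' v hu
    refine le_of_forall_pos_le_add fun ε hε => ?_
    obtain ⟨g, hg⟩ : ∃ g : G, dist u (g • v) < orbDist G u v + ε / 2 :=
      exists_lt_of_ciInf_lt (by change orbDist G u v < _; linarith)
    have h00 : orbDist G u' u = 0 := by
      rw [orbDist_comm, orbDist_eq_infDist,
        ← Metric.mem_closure_iff_infDist_zero (orbit_nonempty G u')]
      exact hu
    obtain ⟨h, hh⟩ : ∃ h : G, dist u' (h • u) < ε / 2 :=
      exists_lt_of_ciInf_lt (by change orbDist G u' u < _; rw [h00]; linarith)
    calc orbDist G u' v ≤ dist u' ((h * g) • v) := orbDist_le G u' v (h * g)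
      _ ≤ dist u' (h • u) + dist (h • u) ((h * g) • v) := dist_triangle _ _ _
      _ = dist u' (h • u) + dist u (g • v) := by rw [mul_smul, dist_smul]
      _ ≤ ε / 2 + (orbDist G u v + ε / 2) := by linarith
      _ = orbDist G u v + ε := by ring
  have h1 : x ∈ closure (MulAction.orbit G x') := by
    rw [← hx]; exact subset_closure (MulAction.mem_orbit_self x)
  have h2 : x' ∈ closure (MulAction.orbit G x) := by
    rw [hx]; exact subset_closure (MulAction.mem_orbit_self x')
  exact le_antisymm (key x' x y h2) (key x x' y h1)

noncomputable instance OrbQuot.metricSpace : MetricSpace (OrbQuot G X) where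
  dist p q := orbDist G p.out q.out
  dist_self p := orbDist_self G _
  dist_comm p q := orbDist_comm G _ _
  dist_triangle p q r := orbDist_triangle G _ _ _
  eq_of_dist_eq_zero {p q} h := by
    rw [← p.out_eq, ← q.out_eq]
    exact Quotient.sound (closure_orbit_eq_of_orbDist_eq_zero G h)

theorem OrbQuot.dist_mk (x y : X) :
    dist (OrbQuot.mk G x) (OrbQuot.mk G y) = orbDist G x y := by
  have hx : closure (MulAction.orbit G (Quotient.out (OrbQuot.mk G x))) =
      closure (MulAction.orbit G x) := Quotient.exact (Quotient.out_eq (OrbQuot.mk G x))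
  have hy : closure (MulAction.orbit G (Quotient.out (OrbQuot.mk G y))) =
      closure (MulAction.orbit G y) := Quotient.exact (Quotient.out_eq (OrbQuot.mk G y))
  calc dist (OrbQuot.mk G x) (OrbQuot.mk G y)
      = orbDist G (Quotient.out (OrbQuot.mk G x)) (Quotient.out (OrbQuot.mk G y)) := rfl
    _ = orbDist G x (Quotient.out (OrbQuot.mk G y)) := orbDist_congr G hx
    _ = orbDist G (Quotient.out (OrbQuot.mk G y)) x := orbDist_comm G _ _
    _ = orbDist G y x := orbDist_congr G hy
    _ = orbDist G x y := (orbDist_comm G _ _).symm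

/-- Subgroups act isometrically whenever the ambient group does. -/
instance Subgroup.isometricSMul (H : Subgroup G) : IsIsometricSMul H X :=
  ⟨fun h => isometry_smul X (h : G)⟩

end OrbitQuotient

section GroupDefs

variable (G : Type*) [Group G] [TopologicalSpace G]

/-- A subset `A` of a topological group is *Roelcke precompact* if for every neighbourhood `U`
of the identity there is a finite set `F` with `A ⊆ U * F * U`. -/
def RoelckePrecompactSet (A : Set G) : Prop :=
  ∀ U ∈ nhds (1 : G), ∃ F : Set G, F.Finite ∧ A ⊆ U * F * U

/-- A topological group is *locally Roelcke precompact* if the identity has a Roelcke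
precompact neighbourhood. -/
def LocallyRoelckePrecompact : Prop :=
  ∃ U ∈ nhds (1 : G), RoelckePrecompactSet G U

/-- A continuous left-invariant pseudometric on a topological group. -/
structure IsContLeftInvPseudoMetric (d : G → G → ℝ) : Prop where
  refl : ∀ x, d x x = 0
  symm : ∀ x y, d x y = d y x
  triangle : ∀ x y z, d x z ≤ d x y + d y z
  left_invariant : ∀ g x y, d (g * x) (g * y) = d x y
  continuous : Continuous fun p : G × G => d p.1 p.2

/-- A subset of a topological group is *coarsely bounded* if it is bounded with respect to
every continuous left-invariant pseudometric. -/
def CoarselyBoundedSet (B : Set G) : Prop :=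
  ∀ d : G → G → ℝ, IsContLeftInvPseudoMetric G d → ∃ C, ∀ a ∈ B, ∀ b ∈ B, d a b ≤ C

/-- An isometric action of a topological group is *coarsely proper* if every set of elements
moving some point a bounded distance is coarsely bounded. -/
def CoarselyProperSMul (X : Type*) [PseudoMetricSpace X] [SMul G X] : Prop :=
  ∀ (x : X) (r : ℝ), 0 < r → CoarselyBoundedSet G {g : G | dist x (g • x) < r}

end GroupDefs

section RpcTheory
variable {G : Type*} [Group G] [TopologicalSpace G] [IsTopologicalGroup G]

lemma mem_sandwich_iff {U F : Set G} {a : G} :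
    a ∈ U * F * U ↔ ∃ u ∈ U, ∃ f ∈ F, ∃ v ∈ U, u * f * v = a := by
  constructor
  · rintro ⟨uf, ⟨u, hu, f, hf, rfl⟩, v, hv, rfl⟩
    exact ⟨u, hu, f, hf, v, hv, rfl⟩
  · rintro ⟨u, hu, f, hf, v, hv, rfl⟩
    exact Set.mul_mem_mul (Set.mul_mem_mul hu hf) hv

lemma exists_symm_open_nhds_mul_sq {U : Set G} (hU : U ∈ nhds 1) :
    ∃ W : Set G, IsOpen W ∧ (1:G) ∈ W ∧ W⁻¹ = W ∧ W * W ⊆ U := by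
  obtain ⟨V, hVo, hV1, hVU⟩ := exists_open_nhds_one_mul_subset hU
  refine ⟨V ∩ V⁻¹, hVo.inter hVo.inv, ⟨hV1, by simpa using hV1⟩, ?_, ?_⟩
  · rw [Set.inter_inv, inv_inv, Set.inter_comm]
  · exact (Set.mul_subset_mul Set.inter_subset_left Set.inter_subset_left).trans hVU

lemma RoelckePrecompactSet.subset {A B : Set G} (h : RoelckePrecompactSet G B)
    (hAB : A ⊆ B) : RoelckePrecompactSet G A := fun U hU => by
  obtain ⟨F, hF, hsub⟩ := h U hU
  exact ⟨F, hF, hAB.trans hsub⟩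

lemma rpc_of_finite {A : Set G} (hA : A.Finite) : RoelckePrecompactSet G A := by
  intro U hU
  have h1 : (1:G) ∈ U := mem_of_mem_nhds hU
  refine ⟨A, hA, fun a ha => ?_⟩
  have := Set.mul_mem_mul (Set.mul_mem_mul h1 ha) h1
  simpa using this

lemma RoelckePrecompactSet.union {A B : Set G} (hA : RoelckePrecompactSet G A)
    (hB : RoelckePrecompactSet G B) : RoelckePrecompactSet G (A ∪ B) := by
  intro U hU
  obtain ⟨F₁, hF₁, h₁⟩ := hA U hU
  obtain ⟨F₂, hF₂, h₂⟩ := hB U hU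
  refine ⟨F₁ ∪ F₂, hF₁.union hF₂, ?_⟩
  intro a ha
  rcases ha with ha | ha
  · have := h₁ ha
    rw [mem_sandwich_iff] at this ⊢
    obtain ⟨u, hu, f, hf, v, hv, rfl⟩ := this
    exact ⟨u, hu, f, Or.inl hf, v, hv, rfl⟩
  · have := h₂ ha
    rw [mem_sandwich_iff] at this ⊢
    obtain ⟨u, hu, f, hf, v, hv, rfl⟩ := this
    exact ⟨u, hu, f, Or.inr hf, v, hv, rfl⟩

lemma conj_nhds_one (g : G) {U : Set G} (hU : U ∈ nhds 1) :
    {x : G | g * x * g⁻¹ ∈ U} ∈ nhds (1:G) := by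
  have hc : Continuous fun x : G => g * x * g⁻¹ :=
    (continuous_const.mul continuous_id).mul continuous_const
  have h1 := hc.continuousAt (x := (1:G)) |>.preimage_mem_nhds (by simpa using hU)
  simpa [Set.preimage] using h1

lemma RoelckePrecompactSet.singleton_mul {A : Set G} (h : RoelckePrecompactSet G A)
    (g : G) : RoelckePrecompactSet G ({g} * A) := by
  intro U hU
  obtain ⟨F, hF, hsub⟩ := h ({x | g * x * g⁻¹ ∈ U} ∩ U) (inter_mem (conj_nhds_one g hU) hU)
  refine ⟨{g} * F, (Set.finite_singleton g).mul hF, ?_⟩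
  rw [Set.singleton_mul]
  rintro _ ⟨a, ha, rfl⟩
  obtain ⟨u, hu, f, hf, v, hv, rfl⟩ := mem_sandwich_iff.mp (hsub ha)
  rw [mem_sandwich_iff]
  refine ⟨g * u * g⁻¹, hu.1, g * f, ?_, v, hv.2, by group⟩
  rw [Set.singleton_mul]
  exact ⟨f, hf, rfl⟩

lemma RoelckePrecompactSet.mul_singleton {A : Set G} (h : RoelckePrecompactSet G A)
    (g : G) : RoelckePrecompactSet G (A * {g}) := by
  intro U hU
  obtain ⟨F, hF, hsub⟩ := h (U ∩ {x | g⁻¹ * x * g ∈ U}) (inter_mem hU (by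
    simpa using conj_nhds_one (g⁻¹) hU))
  refine ⟨F * {g}, hF.mul (Set.finite_singleton g), ?_⟩
  rw [Set.mul_singleton]
  rintro _ ⟨a, ha, rfl⟩
  obtain ⟨u, hu, f, hf, v, hv, rfl⟩ := mem_sandwich_iff.mp (hsub ha)
  rw [mem_sandwich_iff]
  refine ⟨u, hu.1, f * g, ?_, g⁻¹ * v * g, hv.2, by group⟩
  rw [Set.mul_singleton]
  exact ⟨f, hf, rfl⟩

lemma rpc_empty : RoelckePrecompactSet G (∅ : Set G) :=
  fun _ _ => ⟨∅, Set.finite_empty, by simp⟩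

lemma rpc_finite_mul_left {F A : Set G} (hF : F.Finite)
    (hA : RoelckePrecompactSet G A) : RoelckePrecompactSet G (F * A) := by
  refine Set.Finite.induction_on (motive := fun F _ => RoelckePrecompactSet G (F * A)) F hF
    (by simpa [Set.empty_mul] using (rpc_empty (G := G))) ?_
  intro a s _ _ ih
  have h : (insert a s) * A = {a} * A ∪ s * A := by
    rw [Set.insert_eq, Set.union_mul]
  rw [h]
  exact (hA.singleton_mul a).union ih

lemma rpc_mul_finite_right {F A : Set G} (hF : F.Finite)
    (hA : RoelckePrecompactSet G A) : RoelckePrecompactSet G (A * F) := by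
  refine Set.Finite.induction_on (motive := fun F _ => RoelckePrecompactSet G (A * F)) F hF
    (by simpa [Set.mul_empty] using (rpc_empty (G := G))) ?_
  intro a s _ _ ih
  have h : A * (insert a s) = A * {a} ∪ A * s := by
    rw [Set.insert_eq, Set.mul_union]
  rw [h]
  exact (hA.mul_singleton a).union ih

/-- In a locally Roelcke precompact group, products of Roelcke precompact sets are
Roelcke precompact. -/
lemma rpc_mul {V₀ : Set G} (hV₀n : V₀ ∈ nhds 1) (hV₀ : RoelckePrecompactSet G V₀)
    {A B : Set G} (hA : RoelckePrecompactSet G A) (hB : RoelckePrecompactSet G B) :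
    RoelckePrecompactSet G (A * B) := by
  intro U hU
  obtain ⟨W, hWo, hW1, hWs, hWsub⟩ := exists_symm_open_nhds_mul_sq (inter_mem hU hV₀n)
  have hWn : W ∈ nhds 1 := hWo.mem_nhds hW1
  obtain ⟨FA, hFA, hAs⟩ := hA W hWn
  obtain ⟨FB, hFB, hBs⟩ := hB W hWn
  have hWWV₀ : W * W ⊆ V₀ := fun x hx => (hWsub hx).2
  have hWWU : W * W ⊆ U := fun x hx => (hWsub hx).1
  -- M := FA * ((W*W) * FB) is Rpc
  have hM : RoelckePrecompactSet G (FA * ((W * W) * FB)) :=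
    rpc_finite_mul_left hFA (rpc_mul_finite_right hFB (hV₀.subset hWWV₀))
  obtain ⟨F₂, hF₂, hMs⟩ := hM W hWn
  refine ⟨F₂, hF₂, ?_⟩
  have step1 : A * B ⊆ (W * FA * W) * (W * FB * W) := Set.mul_subset_mul hAs hBs
  have step2 : (W * FA * W) * (W * FB * W) = W * (FA * ((W * W) * FB)) * W := by
    simp only [mul_assoc]
  have step3 : W * (FA * ((W * W) * FB)) * W ⊆ W * (W * F₂ * W) * W :=
    Set.mul_subset_mul (Set.mul_subset_mul (Set.Subset.refl W) hMs) (Set.Subset.refl W)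
  have step4 : W * (W * F₂ * W) * W = (W * W) * F₂ * (W * W) := by
    simp only [mul_assoc]
  calc A * B ⊆ (W * FA * W) * (W * FB * W) := step1
    _ = W * (FA * ((W * W) * FB)) * W := step2
    _ ⊆ W * (W * F₂ * W) * W := step3
    _ = (W * W) * F₂ * (W * W) := step4
    _ ⊆ U * F₂ * U := Set.mul_subset_mul (Set.mul_subset_mul hWWU (Set.Subset.refl _)) hWWU

lemma rpc_pow {V₀ : Set G} (hV₀n : V₀ ∈ nhds 1) (hV₀ : RoelckePrecompactSet G V₀)
    {S : Set G} (hS : RoelckePrecompactSet G S) : ∀ k : ℕ, RoelckePrecompactSet G (S ^ k) := by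
  intro k
  induction k with
  | zero => simpa [pow_zero, Set.singleton_one] using rpc_of_finite (Set.finite_singleton (1:G))
  | succ n ih =>
      rw [pow_succ]
      exact rpc_mul hV₀n hV₀ ih hS

end RpcTheory

section LemmaA
variable {G : Type*} [Group G] [TopologicalSpace G] [IsTopologicalGroup G]

lemma exists_symm_open_nhds_mul_sq' {U : Set G} (hU : U ∈ nhds 1) :
    ∃ W : Set G, IsOpen W ∧ (1:G) ∈ W ∧ W⁻¹ = W ∧ W * W ⊆ U := by
  obtain ⟨V, hVo, hV1, hVU⟩ := exists_open_nhds_one_mul_subset hU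
  refine ⟨V ∩ V⁻¹, hVo.inter hVo.inv, ⟨hV1, by simpa using hV1⟩, ?_, ?_⟩
  · rw [Set.inter_inv, inv_inv, Set.inter_comm]
  · exact (Set.mul_subset_mul Set.inter_subset_left Set.inter_subset_left).trans hVU

lemma exists_shrink3 {U : Set G} (hUn : U ∈ nhds 1) :
    ∃ W : Set G, IsOpen W ∧ (1:G) ∈ W ∧ W⁻¹ = W ∧ W * W * W ⊆ U := by
  obtain ⟨W₁, h1o, h11, h1s, h1m⟩ := exists_symm_open_nhds_mul_sq' hUn
  obtain ⟨W₂, h2o, h21, h2s, h2m⟩ := exists_symm_open_nhds_mul_sq' (h1o.mem_nhds h11)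
  have hsub : W₂ ⊆ W₁ := fun x hx => h2m (by simpa using Set.mul_mem_mul hx h21)
  refine ⟨W₂, h2o, h21, h2s, ?_⟩
  calc W₂ * W₂ * W₂ ⊆ W₁ * W₁ := Set.mul_subset_mul h2m hsub
    _ ⊆ U := h1m

/-- Bundled hypotheses for a chain of symmetric neighbourhoods. -/
structure ChainHyp (Vs : ℕ → Set G) : Prop where
  isOpen : ∀ n, IsOpen (Vs n)
  one_mem : ∀ n, (1:G) ∈ Vs n
  symm : ∀ n, (Vs n)⁻¹ = Vs n
  chain : ∀ n, Vs (n+1) * Vs (n+1) * Vs (n+1) ⊆ Vs n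

lemma exists_chain {V : Set G} (hVo : IsOpen V) (hV1 : (1:G) ∈ V) (hVs : V⁻¹ = V) :
    ∃ Vs : ℕ → Set G, Vs 0 = V ∧ ChainHyp Vs := by
  let T := {U : Set G // IsOpen U ∧ (1:G) ∈ U ∧ U⁻¹ = U}
  have step : ∀ U : T, ∃ W : T, (W : Set G) * W * W ⊆ (U : Set G) := by
    rintro ⟨U, hUo, hU1, hUs⟩
    obtain ⟨W, hWo, hW1, hWs, hWm⟩ := exists_shrink3 (hUo.mem_nhds hU1)
    exact ⟨⟨W, hWo, hW1, hWs⟩, hWm⟩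
  choose st hst using step
  let seq : ℕ → T := fun n => Nat.rec ⟨V, hVo, hV1, hVs⟩ (fun _ W => st W) n
  refine ⟨fun n => (seq n).1, ?_, ?_⟩
  · rfl
  · exact ⟨fun n => (seq n).2.1, fun n => (seq n).2.2.1, fun n => (seq n).2.2.2,
      fun n => hst (seq n)⟩

lemma ChainHyp.mono {Vs : ℕ → Set G} (h : ChainHyp Vs) : ∀ {m n : ℕ}, n ≤ m → Vs m ⊆ Vs n := by
  intro m n hnm
  induction m with
  | zero => simpa [Nat.le_zero.mp hnm]
  | succ k ih =>
      rcases Nat.lt_or_ge n (k+1) with h' | h'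
      · intro x hx
        have hx' : x ∈ Vs k := by
          have : x * 1 * 1 ∈ Vs (k+1) * Vs (k+1) * Vs (k+1) :=
            Set.mul_mem_mul (Set.mul_mem_mul hx (h.one_mem _)) (h.one_mem _)
          simpa using h.chain k this
        exact ih (Nat.lt_succ_iff.mp h') hx'
      · have : n = k + 1 := le_antisymm hnm h'
        subst this; exact fun x hx => hx

/-- A "small" letter: an element of some `Vs m`, `m ≥ 1`, with cost `(1/2)^m`. -/
def VLetter (Vs : ℕ → Set G) (p : G × ℝ) : Prop :=
  ∃ m : ℕ, 1 ≤ m ∧ p.1 ∈ Vs m ∧ p.2 = (1/2 : ℝ)^m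

/-- A "big" letter: an element of the dense sequence or its inverse, with cost `n+1`. -/
def GLetter (hD : ℕ → G) (p : G × ℝ) : Prop :=
  ∃ n : ℕ, (p.1 = hD n ∨ p.1 = (hD n)⁻¹) ∧ p.2 = (n : ℝ) + 1

def AnyLetter (Vs : ℕ → Set G) (hD : ℕ → G) (p : G × ℝ) : Prop :=
  VLetter Vs p ∨ GLetter hD p

lemma VLetter.cost_nonneg {Vs : ℕ → Set G} {p : G × ℝ} (h : VLetter Vs p) : 0 ≤ p.2 := by
  obtain ⟨m, _, _, hc⟩ := h; rw [hc]; positivity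

lemma VLetter.cost_le_half {Vs : ℕ → Set G} {p : G × ℝ} (h : VLetter Vs p) : p.2 ≤ 1/2 := by
  obtain ⟨m, hm, _, hc⟩ := h
  rw [hc]
  calc (1/2 : ℝ)^m ≤ (1/2 : ℝ)^1 :=
        pow_le_pow_of_le_one (by norm_num) (by norm_num) hm
    _ = 1/2 := pow_one _

lemma AnyLetter.cost_nonneg {Vs : ℕ → Set G} {hD : ℕ → G} {p : G × ℝ}
    (h : AnyLetter Vs hD p) : 0 ≤ p.2 := by
  rcases h with h | h
  · exact h.cost_nonneg
  · obtain ⟨n, _, hc⟩ := h; rw [hc]; positivity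

/-- The Birkhoff–Kakutani chaining lemma. -/
lemma chain_lemma {Vs : ℕ → Set G} (hC : ChainHyp Vs) :
    ∀ (l : List (G × ℝ)), (∀ p ∈ l, VLetter Vs p) → ∀ n : ℕ,
      (l.map Prod.snd).sum < (1/2 : ℝ)^n → (l.map Prod.fst).prod ∈ Vs n := by
  classical
  suffices h : ∀ (N : ℕ) (l : List (G × ℝ)), l.length ≤ N → (∀ p ∈ l, VLetter Vs p) →
      ∀ n : ℕ, (l.map Prod.snd).sum < (1/2 : ℝ)^n → (l.map Prod.fst).prod ∈ Vs n by
    intro l hl n hsum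
    exact h l.length l le_rfl hl n hsum
  intro N
  induction N with
  | zero =>
      intro l hlen _ n _
      rw [List.length_eq_zero_iff.mp (Nat.le_zero.mp hlen)]
      simpa using hC.one_mem n
  | succ N ih =>
      intro l hlen hlet n hsum
      by_cases hnil : l = []
      · subst hnil; simpa using hC.one_mem n
      have hlpos : 0 < l.length := List.length_pos_iff.mpr hnil
      have hP0 : ((l.take 0).map Prod.snd).sum < (1/2 : ℝ)^(n+1) := by
        simp only [List.take_zero, List.map_nil, List.sum_nil]
        positivity
      obtain ⟨j, hjle, hPj, hmax⟩ : ∃ j, j ≤ l.length - 1 ∧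
          ((l.take j).map Prod.snd).sum < (1/2 : ℝ)^(n+1) ∧
          ∀ k, j < k → k ≤ l.length - 1 →
            ¬ ((l.take k).map Prod.snd).sum < (1/2 : ℝ)^(n+1) := by
        classical
        set P : ℕ → Prop := fun j => ((l.take j).map Prod.snd).sum < (1/2 : ℝ)^(n+1) with hPdef
        refine ⟨Nat.findGreatest P (l.length - 1), Nat.findGreatest_le _, ?_, ?_⟩
        · exact Nat.findGreatest_spec (P := P) (Nat.zero_le _) hP0
        · exact fun k hk hk2 => Nat.findGreatest_is_greatest (P := P) hk hk2
      have hjlt : j < l.length := lt_of_le_of_lt hjle (Nat.sub_lt hlpos one_pos)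
      have hdec : l = l.take j ++ l[j] :: l.drop (j+1) := by
        conv_lhs => rw [← List.take_append_drop j l]
        rw [List.drop_eq_getElem_cons hjlt]
      have e1 : l.map Prod.snd
          = ((l.take j).map Prod.snd) ++ (l[j].2 :: ((l.drop (j+1)).map Prod.snd)) := by
        rw [← List.map_cons, ← List.map_append, ← hdec]
      have hsumsplit := congrArg List.sum e1
      rw [List.sum_append, List.sum_cons] at hsumsplit
      have hnn : ∀ x ∈ l.map Prod.snd, (0:ℝ) ≤ x := by
        intro x hx
        obtain ⟨p, hp, rfl⟩ := List.mem_map.mp hx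
        exact (hlet p hp).cost_nonneg
      have htza : (0:ℝ) ≤ ((l.take j).map Prod.snd).sum :=
        List.sum_nonneg (fun x hx => hnn x (by
          obtain ⟨p, hp, rfl⟩ := List.mem_map.mp hx
          exact List.mem_map.mpr ⟨p, List.mem_of_mem_take hp, rfl⟩))
      have htzb : (0:ℝ) ≤ ((l.drop (j+1)).map Prod.snd).sum :=
        List.sum_nonneg (fun x hx => hnn x (by
          obtain ⟨p, hp, rfl⟩ := List.mem_map.mp hx
          exact List.mem_map.mpr ⟨p, List.mem_of_mem_drop hp, rfl⟩))
      -- prefix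
      have hpre : ((l.take j).map Prod.fst).prod ∈ Vs (n+1) := by
        refine ih (l.take j) ?_ (fun p hp => hlet p (List.mem_of_mem_take hp)) (n+1) hPj
        have hlt : (l.take j).length = j := by
          rw [List.length_take]; exact min_eq_left hjlt.le
        omega
      -- the letter at j
      have hmem : l[j] ∈ l := List.getElem_mem hjlt
      obtain ⟨m, hm1, hmem', hmc⟩ := hlet _ hmem
      have hcost_le : l[j].2 ≤ (l.map Prod.snd).sum :=
        List.single_le_sum hnn _ (List.mem_map.mpr ⟨l[j], hmem, rfl⟩)
      have hcpos : (0:ℝ) < l[j].2 := by rw [hmc]; positivity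
      have hmn : n + 1 ≤ m := by
        by_contra hcon
        push_neg at hcon
        have hge : (1/2:ℝ)^n ≤ (1/2:ℝ)^m :=
          pow_le_pow_of_le_one (by norm_num) (by norm_num) (by omega)
        rw [hmc] at hcost_le
        linarith
      have hletter : l[j].1 ∈ Vs (n+1) := hC.mono hmn hmem'
      -- the suffix
      have hdropsum : ((l.drop (j+1)).map Prod.snd).sum < (1/2:ℝ)^(n+1) := by
        rcases Nat.lt_or_ge j (l.length - 1) with hcase | hcase
        · have hnP := hmax (j+1) (Nat.lt_succ_self j) (by omega)
          push_neg at hnP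
          have htake : ((l.take (j+1)).map Prod.snd).sum
              = ((l.take j).map Prod.snd).sum + l[j].2 := by
            have h1 : l.take (j+1) = l.take j ++ [l[j]] := by
              rw [List.take_succ, List.getElem?_eq_getElem hjlt]
              rfl
            rw [h1, List.map_append, List.sum_append]
            simp
          rw [htake] at hnP
          have hhalf : (1/2:ℝ)^n = (1/2:ℝ)^(n+1) + (1/2:ℝ)^(n+1) := by ring
          linarith
        · have hj1 : l.length ≤ j + 1 := by omega
          rw [List.drop_eq_nil_of_le hj1]
          simp only [List.map_nil, List.sum_nil]
          positivity
      have hsuf : ((l.drop (j+1)).map Prod.fst).prod ∈ Vs (n+1) := by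
        refine ih (l.drop (j+1)) ?_ (fun p hp => hlet p (List.mem_of_mem_drop hp))
          (n+1) hdropsum
        have hld : (l.drop (j+1)).length = l.length - (j+1) := by simp
        omega
      -- combine
      have e2 : l.map Prod.fst
          = ((l.take j).map Prod.fst) ++ (l[j].1 :: ((l.drop (j+1)).map Prod.fst)) := by
        rw [← List.map_cons, ← List.map_append, ← hdec]
      have hfinal := congrArg List.prod e2
      rw [List.prod_append, List.prod_cons] at hfinal
      rw [hfinal, ← mul_assoc]
      exact hC.chain n (Set.mul_mem_mul (Set.mul_mem_mul hpre hletter) hsuf)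


/-- Products of small letters with total cost at most `c`. -/
def Blk (Vs : ℕ → Set G) (c : ℝ) : Set G :=
  {g | ∃ l : List (G × ℝ), (∀ p ∈ l, VLetter Vs p) ∧
    (l.map Prod.snd).sum ≤ c ∧ (l.map Prod.fst).prod = g}

lemma one_mem_Blk {Vs : ℕ → Set G} {c : ℝ} (hc : 0 ≤ c) : (1:G) ∈ Blk Vs c :=
  ⟨[], by simp, by simpa, by simp⟩

lemma Blk_subset_V {Vs : ℕ → Set G} (hC : ChainHyp Vs) {c : ℝ} (hc : c < 1) :
    Blk Vs c ⊆ Vs 0 := by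
  rintro g ⟨l, hl, hsum, rfl⟩
  have : (l.map Prod.snd).sum < (1/2 : ℝ)^0 := by
    rw [pow_zero]; linarith
  exact chain_lemma hC l hl 0 this

lemma Blk_prepend {Vs : ℕ → Set G} {p : G × ℝ} (hp : VLetter Vs p) {c : ℝ} {g : G}
    (hg : g ∈ Blk Vs c) : p.1 * g ∈ Blk Vs (p.2 + c) := by
  obtain ⟨l, hl, hsum, rfl⟩ := hg
  refine ⟨p :: l, ?_, ?_, ?_⟩
  · intro q hq
    rcases List.mem_cons.mp hq with rfl | hq
    · exact hp
    · exact hl q hq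
  · simp only [List.map_cons, List.sum_cons]
    linarith
  · simp

lemma single_mem_Blk {Vs : ℕ → Set G} {p : G × ℝ} (hp : VLetter Vs p) :
    p.1 ∈ Blk Vs p.2 := by
  have := Blk_prepend hp (one_mem_Blk (Vs := Vs) (c := 0) le_rfl)
  simpa using this

/-- The finite set of big letters of cost at most `S`. -/
def BigSet (hD : ℕ → G) (S : ℝ) : Set G :=
  insert 1 (⋃ n ∈ {n : ℕ | (n:ℝ) + 1 ≤ S}, {hD n, (hD n)⁻¹})

lemma bigSet_finite (hD : ℕ → G) (S : ℝ) : (BigSet hD S).Finite := by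
  apply Set.Finite.insert
  apply Set.Finite.biUnion
  · refine Set.Finite.subset (Set.finite_Iic (⌈S⌉₊)) ?_
    intro n hn
    have h1 : (n:ℝ) ≤ S := by
      have := hn
      simp only [Set.mem_setOf_eq] at this
      linarith
    have h2 : (n:ℝ) ≤ (⌈S⌉₊ : ℝ) := h1.trans (Nat.le_ceil S)
    exact Set.mem_Iic.mpr (by exact_mod_cast h2)
  · intro n _
    exact (Set.finite_singleton _).insert _

lemma one_mem_bigSet (hD : ℕ → G) (S : ℝ) : (1:G) ∈ BigSet hD S :=
  Set.mem_insert _ _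

lemma powSubsetPowOfOneMem {s : Set G} (hs : (1:G) ∈ s) {m n : ℕ} (h : m ≤ n) :
    s^m ⊆ s^n := by
  induction n, h using Nat.le_induction with
  | base => exact fun x hx => hx
  | succ n _ ih =>
      intro x hx
      rw [pow_succ]
      have : x * 1 ∈ s^n * s := Set.mul_mem_mul (ih hx) hs
      simpa using this

/-- The surgery lemma: a word of total cost at most `S` lies in a bounded product
of big letters and `Vs 0`. -/
lemma surgery {Vs : ℕ → Set G} (hC : ChainHyp Vs) (hD : ℕ → G) (S : ℝ) :
    ∀ l : List (G × ℝ), (∀ p ∈ l, AnyLetter Vs hD p) → (l.map Prod.snd).sum ≤ S →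
    ∃ (k : ℕ) (c : ℝ), 0 ≤ c ∧ c < 1 ∧ (k : ℝ)/2 + c/2 ≤ (l.map Prod.snd).sum ∧
      (l.map Prod.fst).prod ∈ Blk Vs c * (BigSet hD S * Vs 0)^k := by
  intro l
  induction l with
  | nil =>
      intro _ _
      refine ⟨0, 0, le_rfl, one_pos, by simp, ?_⟩
      simp only [List.map_nil, List.prod_nil, pow_zero]
      have : (1:G) * 1 ∈ Blk Vs 0 * (1 : Set G) :=
        Set.mul_mem_mul (one_mem_Blk le_rfl) (by exact Set.one_mem_one)
      simpa using this
  | cons p l ih =>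
      intro hlet hsum
      have hp := hlet p (List.mem_cons_self (a := p) (l := l))
      have hltail : ∀ q ∈ l, AnyLetter Vs hD q := fun q hq => hlet q (List.mem_cons_of_mem _ hq)
      have htsum : (l.map Prod.snd).sum ≤ S := by
        have hpn : 0 ≤ p.2 := hp.cost_nonneg
        simp only [List.map_cons, List.sum_cons] at hsum
        linarith
      obtain ⟨k, c, hc0, hc1, hbook, hmem⟩ := ih hltail htsum
      obtain ⟨b, hb, z, hz, hbz⟩ := hmem
      have hsumc : ((p :: l).map Prod.snd).sum = p.2 + (l.map Prod.snd).sum := by simp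
      have hprodc : ((p :: l).map Prod.fst).prod = p.1 * (l.map Prod.fst).prod := by simp
      rcases hp with hpv | hpg
      · -- small letter
        have hw0 : 0 ≤ p.2 := hpv.cost_nonneg
        have hwh : p.2 ≤ 1/2 := hpv.cost_le_half
        by_cases hcase : c + p.2 < 1
        · refine ⟨k, p.2 + c, by linarith, by linarith, ?_, ?_⟩
          · rw [hsumc]; linarith
          · rw [hprodc, ← hbz, ← mul_assoc]
            exact Set.mul_mem_mul (Blk_prepend hpv hb) hz
        · push_neg at hcase
          refine ⟨k + 1, p.2, hw0, by linarith, ?_, ?_⟩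
          · rw [hsumc]
            push_cast
            linarith
          · rw [hprodc, ← hbz]
            have hbV : b ∈ Vs 0 := Blk_subset_V hC hc1 hb
            have hbz' : b * z ∈ (BigSet hD S * Vs 0) * (BigSet hD S * Vs 0)^k := by
              refine Set.mul_mem_mul ?_ hz
              have : (1:G) * b ∈ BigSet hD S * Vs 0 :=
                Set.mul_mem_mul (one_mem_bigSet hD S) hbV
              simpa using this
            rw [← pow_succ'] at hbz'
            exact Set.mul_mem_mul (single_mem_Blk hpv) hbz'
      · -- big letter
        obtain ⟨n, heq, hcost⟩ := hpg
        have hcost1 : (1:ℝ) ≤ p.2 := by rw [hcost]; have := Nat.cast_nonneg (α := ℝ) n; linarith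
        have htnn : 0 ≤ (l.map Prod.snd).sum := by
          apply List.sum_nonneg
          intro x hx
          obtain ⟨q, hq, rfl⟩ := List.mem_map.mp hx
          exact (hltail q hq).cost_nonneg
        have hpS : (n:ℝ) + 1 ≤ S := by
          rw [← hcost]
          simp only [List.map_cons, List.sum_cons] at hsum
          linarith
        have hpBig : p.1 ∈ BigSet hD S := by
          apply Set.mem_insert_iff.mpr
          right
          refine Set.mem_biUnion (show n ∈ {n : ℕ | (n:ℝ) + 1 ≤ S} from hpS) ?_
          rcases heq with h | h
          · rw [h]; exact Set.mem_insert _ _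
          · rw [h]; exact Set.mem_insert_of_mem _ rfl
        refine ⟨k + 1, 0, le_rfl, one_pos, ?_, ?_⟩
        · rw [hsumc]
          push_cast
          linarith
        · rw [hprodc, ← hbz]
          have hbV : b ∈ Vs 0 := Blk_subset_V hC hc1 hb
          have hx : (p.1 * b) * z ∈ (BigSet hD S * Vs 0) * (BigSet hD S * Vs 0)^k :=
            Set.mul_mem_mul (Set.mul_mem_mul hpBig hbV) hz
          rw [← pow_succ'] at hx
          have h1 : p.1 * (b * z) = 1 * ((p.1 * b) * z) := by group
          rw [h1]
          exact Set.mul_mem_mul (one_mem_Blk le_rfl) hx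

/-- All word representations' costs of a group element. -/
def wordCost (Vs : ℕ → Set G) (hD : ℕ → G) (g : G) : Set ℝ :=
  {r | ∃ l : List (G × ℝ), (∀ p ∈ l, AnyLetter Vs hD p) ∧
    (l.map Prod.fst).prod = g ∧ (l.map Prod.snd).sum = r}

noncomputable def wordDist (Vs : ℕ → Set G) (hD : ℕ → G) (g₁ g₂ : G) : ℝ :=
  sInf (wordCost Vs hD (g₁⁻¹ * g₂))

lemma wordCost_nonneg {Vs : ℕ → Set G} {hD : ℕ → G} {g : G} {r : ℝ}
    (hr : r ∈ wordCost Vs hD g) : 0 ≤ r := by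
  obtain ⟨l, hl, _, rfl⟩ := hr
  apply List.sum_nonneg
  intro x hx
  obtain ⟨q, hq, rfl⟩ := List.mem_map.mp hx
  exact (hl q hq).cost_nonneg

lemma wordCost_bddBelow {Vs : ℕ → Set G} {hD : ℕ → G} (g : G) :
    BddBelow (wordCost Vs hD g) := ⟨0, fun r hr => wordCost_nonneg hr⟩

lemma wordCost_nonempty {Vs : ℕ → Set G} {hD : ℕ → G} (hC : ChainHyp Vs)
    (hdense : DenseRange hD) (g : G) : (wordCost Vs hD g).Nonempty := by
  have hopen : IsOpen ((fun x => g * x) '' (Vs 1)) :=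
    (Homeomorph.mulLeft g).isOpenMap _ (hC.isOpen 1)
  have hne : ((fun x => g * x) '' (Vs 1)).Nonempty := ⟨g * 1, ⟨1, hC.one_mem 1, rfl⟩⟩
  obtain ⟨n, hn⟩ := hdense.exists_mem_open hopen hne
  obtain ⟨v, hv, heq⟩ := hn
  refine ⟨((n:ℝ)+1) + ((1/2:ℝ)^1 + 0), [(hD n, (n:ℝ)+1), (v⁻¹, (1/2:ℝ)^1)], ?_, ?_, ?_⟩
  · intro p hp
    rcases List.mem_cons.mp hp with rfl | hp
    · exact Or.inr ⟨n, Or.inl rfl, rfl⟩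
    · rcases List.mem_cons.mp hp with rfl | hp
      · refine Or.inl ⟨1, le_rfl, ?_, rfl⟩
        have : v⁻¹ ∈ (Vs 1)⁻¹ := by
          rw [Set.mem_inv]; simpa using hv
        rwa [hC.symm 1] at this
      · exact absurd hp List.not_mem_nil
  · simp only [List.map_cons, List.map_nil, List.prod_cons, List.prod_nil, mul_one]
    rw [← heq]
    group
  · simp

lemma wordCost_inv {Vs : ℕ → Set G} {hD : ℕ → G} (hC : ChainHyp Vs) {g : G} {r : ℝ}
    (hr : r ∈ wordCost Vs hD g) : r ∈ wordCost Vs hD g⁻¹ := by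
  obtain ⟨l, hl, hprod, hsum⟩ := hr
  refine ⟨(l.map (fun p => (p.1⁻¹, p.2))).reverse, ?_, ?_, ?_⟩
  · intro p hp
    rw [List.mem_reverse] at hp
    obtain ⟨q, hq, rfl⟩ := List.mem_map.mp hp
    rcases hl q hq with ⟨m, hm1, hmem, hc⟩ | ⟨n, heq, hc⟩
    · refine Or.inl ⟨m, hm1, ?_, hc⟩
      have : q.1⁻¹ ∈ (Vs m)⁻¹ := by rw [Set.mem_inv]; simpa using hmem
      rwa [hC.symm m] at this
    · refine Or.inr ⟨n, ?_, hc⟩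
      rcases heq with h | h
      · exact Or.inr (by rw [h])
      · exact Or.inl (by rw [h, inv_inv])
  · rw [← hprod, List.prod_inv_reverse, List.map_reverse, List.map_map, List.map_map]
    rfl
  · rw [← hsum, List.map_reverse, List.sum_reverse, List.map_map]
    rfl

lemma wordCost_mul {Vs : ℕ → Set G} {hD : ℕ → G} {g₁ g₂ : G} {r₁ r₂ : ℝ}
    (h₁ : r₁ ∈ wordCost Vs hD g₁) (h₂ : r₂ ∈ wordCost Vs hD g₂) :
    r₁ + r₂ ∈ wordCost Vs hD (g₁ * g₂) := by
  obtain ⟨l₁, hl₁, hp₁, hs₁⟩ := h₁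
  obtain ⟨l₂, hl₂, hp₂, hs₂⟩ := h₂
  refine ⟨l₁ ++ l₂, ?_, ?_, ?_⟩
  · intro p hp
    rcases List.mem_append.mp hp with hp | hp
    · exact hl₁ p hp
    · exact hl₂ p hp
  · rw [List.map_append, List.prod_append, hp₁, hp₂]
  · rw [List.map_append, List.sum_append, hs₁, hs₂]

lemma wordDist_pm {Vs : ℕ → Set G} {hD : ℕ → G} (hC : ChainHyp Vs)
    (hdense : DenseRange hD) : IsContLeftInvPseudoMetric G (wordDist Vs hD) := by
  have hne : ∀ g : G, (wordCost Vs hD g).Nonempty := wordCost_nonempty hC hdense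
  have hbdd : ∀ g : G, BddBelow (wordCost Vs hD g) := fun g => wordCost_bddBelow g
  have hnonneg : ∀ g₁ g₂ : G, 0 ≤ wordDist Vs hD g₁ g₂ := fun g₁ g₂ =>
    le_csInf (hne _) (fun r hr => wordCost_nonneg hr)
  have hrefl : ∀ x : G, wordDist Vs hD x x = 0 := by
    intro x
    refine le_antisymm ?_ (hnonneg x x)
    have h0 : (0:ℝ) ∈ wordCost Vs hD (x⁻¹ * x) := ⟨[], by simp, by simp, by simp⟩
    exact csInf_le (hbdd _) h0
  have htri : ∀ x y z : G, wordDist Vs hD x z ≤ wordDist Vs hD x y + wordDist Vs hD y z := by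
    intro x y z
    refine le_of_forall_pos_le_add fun ε hε => ?_
    obtain ⟨r₁, hr₁, hr₁'⟩ := Real.lt_sInf_add_pos (hne (x⁻¹ * y)) (half_pos hε)
    obtain ⟨r₂, hr₂, hr₂'⟩ := Real.lt_sInf_add_pos (hne (y⁻¹ * z)) (half_pos hε)
    have hmem : r₁ + r₂ ∈ wordCost Vs hD (x⁻¹ * z) := by
      have := wordCost_mul hr₁ hr₂
      rwa [show (x⁻¹ * y) * (y⁻¹ * z) = x⁻¹ * z by group] at this
    have : wordDist Vs hD x z ≤ r₁ + r₂ := csInf_le (hbdd _) hmem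
    unfold wordDist at *
    linarith
  have hsymm : ∀ x y : G, wordDist Vs hD x y = wordDist Vs hD y x := by
    have key : ∀ x y : G, wordDist Vs hD y x ≤ wordDist Vs hD x y := by
      intro x y
      refine le_csInf (hne _) fun r hr => ?_
      have := wordCost_inv hC hr
      rw [show (x⁻¹ * y)⁻¹ = y⁻¹ * x by group] at this
      exact csInf_le (hbdd _) this
    exact fun x y => le_antisymm (key y x) (key x y)
  refine ⟨hrefl, hsymm, htri, ?_, ?_⟩
  · intro g x y
    unfold wordDist
    rw [show (g * x)⁻¹ * (g * y) = x⁻¹ * y by group]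
  · -- continuity
    have hsmall : ∀ (x y : G) (n : ℕ), 1 ≤ n → x⁻¹ * y ∈ Vs n →
        wordDist Vs hD x y ≤ (1/2:ℝ)^n := by
      intro x y n hn hmem
      refine csInf_le (hbdd _) ?_
      exact ⟨[(x⁻¹ * y, (1/2:ℝ)^n)], by
        intro p hp
        rcases List.mem_cons.mp hp with rfl | hp
        · exact Or.inl ⟨n, hn, hmem, rfl⟩
        · exact absurd hp List.not_mem_nil, by simp, by simp⟩
    have hdiff : ∀ a b x y : G, wordDist Vs hD x y ≤
        wordDist Vs hD a b + (wordDist Vs hD a x + wordDist Vs hD b y) := by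
      intro a b x y
      calc wordDist Vs hD x y ≤ wordDist Vs hD x a + wordDist Vs hD a y := htri _ _ _
        _ ≤ wordDist Vs hD x a + (wordDist Vs hD a b + wordDist Vs hD b y) := by
            linarith [htri a b y]
        _ = wordDist Vs hD a b + (wordDist Vs hD a x + wordDist Vs hD b y) := by
            rw [hsymm x a]; ring
    rw [continuous_iff_continuousAt]
    rintro ⟨a, b⟩
    rw [ContinuousAt, Metric.tendsto_nhds]
    intro ε hε
    obtain ⟨n, hn⟩ : ∃ n : ℕ, (1/2:ℝ)^n < ε / 2 := by
      obtain ⟨n, hn⟩ := exists_pow_lt_of_lt_one (half_pos hε) (by norm_num : (1/2:ℝ) < 1)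
      exact ⟨n, hn⟩
    set m := n + 1 with hm
    have hm1 : 1 ≤ m := Nat.le_add_left 1 n
    have hmlt : (1/2:ℝ)^m < ε/2 := by
      calc (1/2:ℝ)^m ≤ (1/2:ℝ)^n :=
            pow_le_pow_of_le_one (by norm_num) (by norm_num) (Nat.le_succ n)
        _ < ε/2 := hn
    have hS : {p : G × G | a⁻¹ * p.1 ∈ Vs m ∧ b⁻¹ * p.2 ∈ Vs m} ∈ nhds (a, b) := by
      have h₁ : {x : G | a⁻¹ * x ∈ Vs m} ∈ nhds a := by
        have hc : Continuous fun x : G => a⁻¹ * x := continuous_const.mul continuous_id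
        have := hc.continuousAt (x := a) |>.preimage_mem_nhds
          (by simpa using (hC.isOpen m).mem_nhds (hC.one_mem m))
        simpa [Set.preimage] using this
      have h₂ : {x : G | b⁻¹ * x ∈ Vs m} ∈ nhds b := by
        have hc : Continuous fun x : G => b⁻¹ * x := continuous_const.mul continuous_id
        have := hc.continuousAt (x := b) |>.preimage_mem_nhds
          (by simpa using (hC.isOpen m).mem_nhds (hC.one_mem m))
        simpa [Set.preimage] using this
      exact prod_mem_nhds h₁ h₂
    filter_upwards [hS]
    rintro ⟨x, y⟩ ⟨hx, hy⟩
    have d₁ : wordDist Vs hD a x ≤ (1/2:ℝ)^m := hsmall a x m hm1 hx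
    have d₂ : wordDist Vs hD b y ≤ (1/2:ℝ)^m := hsmall b y m hm1 hy
    have up : wordDist Vs hD x y ≤ wordDist Vs hD a b + (wordDist Vs hD a x + wordDist Vs hD b y) :=
      hdiff a b x y
    have down : wordDist Vs hD a b ≤ wordDist Vs hD x y +
        (wordDist Vs hD x a + wordDist Vs hD y b) := hdiff x y a b
    rw [Real.dist_eq, abs_sub_lt_iff]
    constructor
    · have := hsymm x a
      have := hsymm y b
      linarith [up, d₁, d₂]
    · rw [hsymm a x] at d₁
      rw [hsymm b y] at d₂
      linarith [down]

/-- Rosendal's characterisation: a coarsely bounded set is contained in a bounded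
product of a finite set and a given symmetric open neighbourhood of `1`. -/
lemma cb_words [TopologicalSpace.SeparableSpace G]
    {A : Set G} (hA : CoarselyBoundedSet G A) {a₀ : G} (ha₀ : a₀ ∈ A)
    {V : Set G} (hVo : IsOpen V) (hV1 : (1:G) ∈ V) (hVsym : V⁻¹ = V) :
    ∃ (F : Set G) (k : ℕ), F.Finite ∧ A ⊆ {a₀} * (F * V)^k := by
  haveI : Nonempty G := ⟨1⟩
  obtain ⟨Vs, hVs0, hC⟩ := exists_chain hVo hV1 hVsym
  set hD := TopologicalSpace.denseSeq G with hhD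
  have hdense : DenseRange hD := TopologicalSpace.denseRange_denseSeq G
  obtain ⟨C, hc⟩ := hA (wordDist Vs hD) (wordDist_pm hC hdense)
  set S : ℝ := max C 0 + 1 with hSdef
  refine ⟨BigSet hD S, ⌈2*S⌉₊ + 1, bigSet_finite hD S, ?_⟩
  intro a ha
  have hd : wordDist Vs hD a₀ a ≤ C := hc a₀ ha₀ a ha
  obtain ⟨r, hr, hrlt⟩ :=
    Real.lt_sInf_add_pos (wordCost_nonempty hC hdense (a₀⁻¹ * a)) one_pos
  have hsInf : sInf (wordCost Vs hD (a₀⁻¹ * a)) = wordDist Vs hD a₀ a := rfl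
  have hrS : r ≤ S := by
    rw [hsInf] at hrlt
    have hCle : C ≤ max C 0 := le_max_left _ _
    rw [hSdef]
    linarith
  obtain ⟨l, hl, hprod, hsum⟩ := hr
  obtain ⟨k, c, hc0, hc1, hbook, hmem⟩ := surgery hC hD S l hl (by rw [hsum]; exact hrS)
  have hkS : (k:ℝ) ≤ 2*S := by
    rw [hsum] at hbook
    linarith
  have hkN : k ≤ ⌈2*S⌉₊ := by
    have h2 : (k:ℝ) ≤ (⌈2*S⌉₊ : ℝ) := hkS.trans (Nat.le_ceil (2*S))
    exact_mod_cast h2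
  have hBlk : Blk Vs c ⊆ Vs 0 := Blk_subset_V hC hc1
  have h2 : (l.map Prod.fst).prod ∈ (BigSet hD S * Vs 0)^(k+1) := by
    obtain ⟨b, hb, z, hz, hbz⟩ := hmem
    have hx : (1*b)*z ∈ (BigSet hD S * Vs 0) * (BigSet hD S * Vs 0)^k :=
      Set.mul_mem_mul (Set.mul_mem_mul (one_mem_bigSet _ _) (hBlk hb)) hz
    rw [← pow_succ'] at hx
    rw [← hbz]
    simpa using hx
  have h3 : (l.map Prod.fst).prod ∈ (BigSet hD S * Vs 0)^(⌈2*S⌉₊+1) := by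
    refine powSubsetPowOfOneMem ?_ (by omega) h2
    have hx : (1:G)*1 ∈ BigSet hD S * Vs 0 :=
      Set.mul_mem_mul (one_mem_bigSet _ _) (hC.one_mem 0)
    simpa using hx
  rw [hprod, hVs0] at h3
  have ha' : a = a₀ * (a₀⁻¹ * a) := by group
  rw [ha']
  exact Set.mul_mem_mul rfl h3

end LemmaA


section CbRpcSection

variable {G : Type*} [Group G] [TopologicalSpace G] [IsTopologicalGroup G]

lemma cb_subset' {A B : Set G} (hB : CoarselyBoundedSet G B) (h : A ⊆ B) :
    CoarselyBoundedSet G A := fun d hd => by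
  obtain ⟨C, hC⟩ := hB d hd
  exact ⟨C, fun a ha b hb => hC a (h ha) b (h hb)⟩

/-- In a locally Roelcke precompact Polish group, coarsely bounded sets are Roelcke
precompact. -/
lemma rpc_of_cb [TopologicalSpace.SeparableSpace G]
    (hlRpc : LocallyRoelckePrecompact G) {A : Set G} (hA : CoarselyBoundedSet G A) :
    RoelckePrecompactSet G A := by
  obtain ⟨V₀, hV₀n, hV₀⟩ := hlRpc
  rcases Set.eq_empty_or_nonempty A with rfl | ⟨a₀, ha₀⟩
  · exact rpc_empty
  obtain ⟨t, hts, hto, ht1⟩ := mem_nhds_iff.mp hV₀n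
  set W : Set G := t ∩ t⁻¹ with hW
  have hWo : IsOpen W := hto.inter hto.inv
  have hW1 : (1:G) ∈ W := ⟨ht1, by simpa using ht1⟩
  have hWsym : W⁻¹ = W := by rw [hW, Set.inter_inv, inv_inv, Set.inter_comm]
  have hWV₀ : W ⊆ V₀ := fun x hx => hts hx.1
  obtain ⟨F, k, hFfin, hsub⟩ := cb_words hA ha₀ hWo hW1 hWsym
  have hWrpc : RoelckePrecompactSet G W := hV₀.subset hWV₀
  have hFW : RoelckePrecompactSet G (F * W) := rpc_finite_mul_left hFfin hWrpc
  have hpow : RoelckePrecompactSet G ((F * W)^k) := rpc_pow hV₀n hV₀ hFW k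
  exact (hpow.singleton_mul a₀).subset hsub

end CbRpcSection

section ActionLemmas

variable {G : Type*} [Group G] [TopologicalSpace G] [IsTopologicalGroup G]
variable {Z : Type*} [PseudoMetricSpace Z] [MulAction G Z] [IsIsometricSMul G Z]
  [ContinuousSMul G Z]

lemma orbital_mem_nhds (z : Z) {ε : ℝ} (hε : 0 < ε) :
    {g : G | dist z (g • z) < ε} ∈ nhds (1:G) := by
  have hc : Continuous fun g : G => dist z (g • z) :=
    continuous_const.dist (continuous_id.smul continuous_const)
  have ho : IsOpen {g : G | dist z (g • z) < ε} := isOpen_lt hc continuous_const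
  refine ho.mem_nhds ?_
  show dist z ((1:G) • z) < ε
  rw [one_smul, dist_self]
  exact hε

lemma cb_orbit_bound {E : Set G} (hE : CoarselyBoundedSet G E) (z : Z) :
    ∃ C, ∀ g ∈ E, dist z (g • z) ≤ C := by
  rcases Set.eq_empty_or_nonempty E with rfl | ⟨g₀, hg₀⟩
  · exact ⟨0, by simp⟩
  have hpm : IsContLeftInvPseudoMetric G (fun g h => dist (g • z) (h • z)) := by
    refine ⟨fun x => dist_self _, fun x y => dist_comm _ _,
      fun x y w => dist_triangle _ _ _, ?_, ?_⟩
    · intro g x y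
      rw [mul_smul, mul_smul, dist_smul]
    · exact (continuous_fst.smul continuous_const).dist (continuous_snd.smul continuous_const)
  obtain ⟨C, hC⟩ := hE _ hpm
  refine ⟨dist z (g₀ • z) + C, fun g hg => ?_⟩
  calc dist z (g • z) ≤ dist z (g₀ • z) + dist (g₀ • z) (g • z) := dist_triangle _ _ _
    _ ≤ dist z (g₀ • z) + C := by linarith [hC g₀ hg₀ g hg]

lemma cb_shifted (hcp : CoarselyProperSMul G Z) (z w : Z) (r : ℝ) :
    CoarselyBoundedSet G {g : G | dist w (g • z) < r} := by
  rcases le_or_gt r 0 with hr | hr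
  · have hempty : {g : G | dist w (g • z) < r} = ∅ := by
      ext g
      simp only [Set.mem_setOf_eq, Set.mem_empty_iff_false, iff_false, not_lt]
      linarith [dist_nonneg (x := w) (y := g • z)]
    rw [hempty]
    exact fun d hd => ⟨0, by simp⟩
  · have hpos : 0 < r + dist z w + dist z w := by
      have := dist_nonneg (x := z) (y := w); linarith
    refine cb_subset' (hcp z (r + dist z w + dist z w) hpos) ?_
    intro g hg
    simp only [Set.mem_setOf_eq] at hg ⊢
    calc dist z (g • z) ≤ dist z w + dist w (g • z) := dist_triangle _ _ _
      _ < dist z w + r := by linarith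
      _ ≤ r + dist z w + dist z w := by linarith [dist_nonneg (x := z) (y := w)]

end ActionLemmas

section QuotGeom

variable (G : Type*) {Z : Type*} [Group G] [PseudoMetricSpace Z] [MulAction G Z]

lemma orbDist_le_dist (u v : Z) : orbDist G u v ≤ dist u v := by
  simpa using orbDist_le G u v 1

lemma exists_orbDist_lt {u v : Z} {r : ℝ} (h : orbDist G u v < r) :
    ∃ g : G, dist u (g • v) < r :=
  exists_lt_of_ciInf_lt (show (⨅ g : G, dist u (g • v)) < r from h)

lemma OrbQuot.mk_smul (g : G) (u : Z) : OrbQuot.mk G (g • u) = OrbQuot.mk G u :=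
  Quotient.sound (show closure (MulAction.orbit G (g • u)) = closure (MulAction.orbit G u)
    by rw [MulAction.orbit_smul])

variable [IsIsometricSMul G Z]

lemma dist_mk_le_dist (u v : Z) :
    dist (OrbQuot.mk G u) (OrbQuot.mk G v) ≤ dist u v := by
  rw [OrbQuot.dist_mk]
  exact orbDist_le_dist G u v

lemma dist_mk_lt_of_exists {u v : Z} {r : ℝ} {g : G} (h : dist u (g • v) < r) :
    dist (OrbQuot.mk G u) (OrbQuot.mk G v) < r := by
  rw [OrbQuot.dist_mk]
  exact lt_of_le_of_lt (orbDist_le G u v g) h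

end QuotGeom

section QuotComplete

variable (G : Type*) {Z : Type*} [Group G] [PseudoMetricSpace Z] [MulAction G Z]
  [IsIsometricSMul G Z]

theorem orbQuot_complete [CompleteSpace Z] : CompleteSpace (OrbQuot G Z) := by
  apply Metric.complete_of_convergent_controlled_sequences (fun n => (1/2:ℝ)^n)
    (fun n => by positivity)
  intro u hu
  have hstep : ∀ (n : ℕ) (p : Z), ∃ q : Z, OrbQuot.mk G q = u (n+1) ∧
      (OrbQuot.mk G p = u n → dist p q < (1/2:ℝ)^n) := by
    intro n p
    by_cases hp : OrbQuot.mk G p = u n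
    · have hd : orbDist G p (Quotient.out (u (n+1))) < (1/2:ℝ)^n := by
        have h1 : dist (u n) (u (n+1)) < (1/2:ℝ)^n := hu n n (n+1) le_rfl (Nat.le_succ n)
        have h2 : OrbQuot.mk G (Quotient.out (u (n+1))) = u (n+1) := Quotient.out_eq _
        rw [← OrbQuot.dist_mk G p (Quotient.out (u (n+1)))] at *
        rw [hp, h2]
        exact h1
      obtain ⟨g, hg⟩ := exists_orbDist_lt G hd
      exact ⟨g • Quotient.out (u (n+1)),
        by rw [OrbQuot.mk_smul]; exact Quotient.out_eq _, fun _ => hg⟩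
    · exact ⟨Quotient.out (u (n+1)), Quotient.out_eq _, fun h => absurd h hp⟩
  choose step hstep1 hstep2 using hstep
  set w : ℕ → Z := fun n => Nat.rec (Quotient.out (u 0)) (fun n p => step n p) n with hw
  have hwsucc : ∀ n, w (n+1) = step n (w n) := fun n => rfl
  have hwmk : ∀ n, OrbQuot.mk G (w n) = u n := by
    intro n
    induction n with
    | zero => exact Quotient.out_eq _
    | succ n _ => rw [hwsucc n]; exact hstep1 n (w n)
  have hwd : ∀ n, dist (w n) (w (n+1)) < (1/2:ℝ)^n := by
    intro n
    rw [hwsucc n]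
    exact hstep2 n (w n) (hwmk n)
  have hcauchy : CauchySeq w := by
    apply cauchySeq_of_le_geometric (1/2 : ℝ) 1 (by norm_num)
    intro n
    rw [one_mul]
    exact (hwd n).le
  obtain ⟨p, hp⟩ := cauchySeq_tendsto_of_complete hcauchy
  refine ⟨OrbQuot.mk G p, ?_⟩
  rw [tendsto_iff_dist_tendsto_zero]
  have hb : ∀ n, dist (u n) (OrbQuot.mk G p) ≤ dist (w n) p := by
    intro n
    rw [← hwmk n]
    exact dist_mk_le_dist G (w n) p
  have hd0 : Tendsto (fun n => dist (w n) p) atTop (nhds 0) := by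
    rw [← tendsto_iff_dist_tendsto_zero]
    exact hp
  exact squeeze_zero (fun n => dist_nonneg) hb hd0

end QuotComplete


section MainTB

variable {G X Y : Type*} [Group G] [TopologicalSpace G] [IsTopologicalGroup G]
  [TopologicalSpace.SeparableSpace G]
  [MetricSpace X] [MulAction G X] [IsIsometricSMul G X] [ContinuousSMul G X]
  [MetricSpace Y] [MulAction G Y] [IsIsometricSMul G Y] [ContinuousSMul G Y]

theorem orbQuot_prod_totallyBounded
    (hlRpc : LocallyRoelckePrecompact G)
    (hXcp : CoarselyProperSMul G X) (hXq : ProperSpace (OrbQuot G X))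
    (hYcp : CoarselyProperSMul G Y) (hYq : ProperSpace (OrbQuot G Y))
    (q₀ : OrbQuot G (X × Y)) (R : ℝ) (hR : 0 ≤ R) :
    TotallyBounded (Metric.closedBall q₀ R) := by
  rw [Metric.totallyBounded_iff]
  intro ε' hε'
  set ε : ℝ := ε'/3 with hεdef
  have hε : 0 < ε := by positivity
  set z₀ : X × Y := Quotient.out q₀ with hz₀
  set x₀ : X := z₀.1 with hx₀
  set y₀ : Y := z₀.2 with hy₀
  obtain ⟨tX, htXfin, htXcov⟩ := (Metric.totallyBounded_iff.mp
    (hXq.isCompact_closedBall (OrbQuot.mk G x₀) (R+1)).totallyBounded) ε hε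
  set a : OrbQuot G X → X := fun i => Quotient.out i with ha
  have hCex : ∀ i : OrbQuot G X, ∃ C, ∀ g ∈ {g : G | dist (a i) (g • x₀) < R + 2 + ε},
      dist y₀ (g • y₀) ≤ C :=
    fun i => cb_orbit_bound (cb_shifted hXcp x₀ (a i) (R+2+ε)) y₀
  choose C hC using hCex
  set S : OrbQuot G X → ℝ := fun i => C i + R + 2 with hSdef
  have htYex : ∀ i : OrbQuot G X, ∃ t : Set (OrbQuot G Y), t.Finite ∧
      Metric.closedBall (OrbQuot.mk G y₀) (S i) ⊆ ⋃ y ∈ t, Metric.ball y ε :=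
    fun i => (Metric.totallyBounded_iff.mp
      (hYq.isCompact_closedBall (OrbQuot.mk G y₀) (S i)).totallyBounded) ε hε
  choose tY htYfin htYcov using htYex
  set b : OrbQuot G Y → Y := fun j => Quotient.out j with hb
  have hC'ex : ∀ (i : OrbQuot G X) (j : OrbQuot G Y), ∃ C', ∀ h ∈
      {h : G | dist (b j) (h • y₀) < S i + ε + 1}, dist (a i) (h • (a i)) ≤ C' :=
    fun i j => cb_orbit_bound (cb_shifted hYcp y₀ (b j) (S i + ε + 1)) (a i)
  choose C' hC' using hC'ex
  set T : OrbQuot G X → OrbQuot G Y → ℝ := fun i j => C' i j + ε with hTdef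
  have htX2ex : ∀ (i : OrbQuot G X) (j : OrbQuot G Y), ∃ t : Set (OrbQuot G X), t.Finite ∧
      Metric.closedBall (OrbQuot.mk G (a i)) (T i j) ⊆ ⋃ y ∈ t, Metric.ball y ε :=
    fun i j => (Metric.totallyBounded_iff.mp
      (hXq.isCompact_closedBall _ _).totallyBounded) ε hε
  choose tX2 htX2fin htX2cov using htX2ex
  have hFcex : ∀ (i : OrbQuot G X) (j : OrbQuot G Y) (m : OrbQuot G X),
      ∃ F : Set G, F.Finite ∧ {l : G | dist (a m) (l • (a i)) < T i j + ε + 1} ⊆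
        {u : G | dist ((a m, b j) : X × Y) (u • (a m, b j)) < ε} * F *
        {u : G | dist ((a m, b j) : X × Y) (u • (a m, b j)) < ε} := by
    intro i j m
    have hrpc := rpc_of_cb hlRpc (cb_shifted hXcp (a i) (a m) (T i j + ε + 1))
    exact hrpc _ (orbital_mem_nhds ((a m, b j) : X × Y) hε)
  choose Fc hFcfin hFccov using hFcex
  refine ⟨⋃ i ∈ tX, ⋃ j ∈ tY i, ⋃ m ∈ tX2 i j, ⋃ f ∈ Fc i j m,
    {OrbQuot.mk G ((a m, f • b j) : X × Y)}, ?_, ?_⟩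
  · exact htXfin.biUnion fun i _ => (htYfin i).biUnion fun j _ =>
      (htX2fin i j).biUnion fun m _ => (hFcfin i j m).biUnion fun f _ =>
        Set.finite_singleton _
  intro q hq
  -- good representative of q
  have hqd : orbDist G z₀ (Quotient.out q) ≤ R := by
    have h1 : dist q q₀ ≤ R := Metric.mem_closedBall.mp hq
    have h2 : dist q q₀ = orbDist G (Quotient.out q) (Quotient.out q₀) := rfl
    rw [h2, orbDist_comm] at h1
    exact h1
  obtain ⟨g₀, hg₀⟩ := exists_orbDist_lt G (lt_of_le_of_lt hqd (by linarith : R < R+1))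
  set w : X × Y := g₀ • (Quotient.out q) with hwdef
  have hmkw : OrbQuot.mk G w = q := by
    rw [OrbQuot.mk_smul]
    exact Quotient.out_eq _
  have hwx : dist x₀ w.1 < R + 1 := by
    calc dist x₀ w.1 ≤ dist z₀ w := by rw [Prod.dist_eq]; exact le_sup_left
      _ < R + 1 := hg₀
  have hwy : dist y₀ w.2 < R + 1 := by
    calc dist y₀ w.2 ≤ dist z₀ w := by rw [Prod.dist_eq]; exact le_sup_right
      _ < R + 1 := hg₀
  -- first X-net index
  have hin1 : OrbQuot.mk G w.1 ∈ Metric.closedBall (OrbQuot.mk G x₀) (R+1) := by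
    rw [Metric.mem_closedBall]
    calc dist (OrbQuot.mk G w.1) (OrbQuot.mk G x₀) ≤ dist w.1 x₀ := dist_mk_le_dist G _ _
      _ ≤ R + 1 := by rw [dist_comm]; exact hwx.le
  obtain ⟨i, hitX, hi⟩ := Set.mem_iUnion₂.mp (htXcov hin1)
  have hi' : orbDist G (a i) w.1 < ε := by
    have h1 : dist (OrbQuot.mk G w.1) (OrbQuot.mk G (a i)) < ε := by
      rw [show OrbQuot.mk G (a i) = i from Quotient.out_eq i]
      exact Metric.mem_ball.mp hi
    rw [OrbQuot.dist_mk, orbDist_comm] at h1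
    exact h1
  obtain ⟨g, hg⟩ := exists_orbDist_lt G hi'
  have hgE : g ∈ {g : G | dist (a i) (g • x₀) < R + 2 + ε} := by
    simp only [Set.mem_setOf_eq]
    calc dist (a i) (g • x₀) ≤ dist (a i) (g • w.1) + dist (g • w.1) (g • x₀) :=
          dist_triangle _ _ _
      _ = dist (a i) (g • w.1) + dist w.1 x₀ := by rw [dist_smul]
      _ < ε + (R + 1) := by
          have := hwx
          rw [dist_comm w.1 x₀]
          linarith
      _ ≤ R + 2 + ε := by linarith
  have hgy : dist y₀ (g • y₀) ≤ C i := hC i g hgE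
  have hgy2 : dist y₀ (g • w.2) ≤ C i + (R + 1) := by
    calc dist y₀ (g • w.2) ≤ dist y₀ (g • y₀) + dist (g • y₀) (g • w.2) := dist_triangle _ _ _
      _ = dist y₀ (g • y₀) + dist y₀ w.2 := by rw [dist_smul]
      _ ≤ C i + (R + 1) := by linarith [hwy.le]
  -- Y-net index
  have hin2 : OrbQuot.mk G (g • w.2) ∈ Metric.closedBall (OrbQuot.mk G y₀) (S i) := by
    rw [Metric.mem_closedBall]
    calc dist (OrbQuot.mk G (g • w.2)) (OrbQuot.mk G y₀) ≤ dist (g • w.2) y₀ :=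
          dist_mk_le_dist G _ _
      _ = dist y₀ (g • w.2) := dist_comm _ _
      _ ≤ S i := by rw [hSdef]; simp only []; linarith
  obtain ⟨j, hjtY, hj⟩ := Set.mem_iUnion₂.mp (htYcov i hin2)
  have hj' : orbDist G (b j) (g • w.2) < ε := by
    have h1 : dist (OrbQuot.mk G (g • w.2)) (OrbQuot.mk G (b j)) < ε := by
      rw [show OrbQuot.mk G (b j) = j from Quotient.out_eq j]
      exact Metric.mem_ball.mp hj
    rw [OrbQuot.dist_mk, orbDist_comm] at h1
    exact h1
  obtain ⟨h, hh⟩ := exists_orbDist_lt G hj'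
  have hhF : h ∈ {h : G | dist (b j) (h • y₀) < S i + ε + 1} := by
    simp only [Set.mem_setOf_eq]
    calc dist (b j) (h • y₀)
        ≤ dist (b j) (h • (g • w.2)) + dist (h • (g • w.2)) (h • y₀) := dist_triangle _ _ _
      _ = dist (b j) (h • (g • w.2)) + dist (g • w.2) y₀ := by rw [dist_smul]
      _ < ε + (C i + (R + 1)) := by
          rw [dist_comm (g • w.2) y₀]
          linarith
      _ ≤ S i + ε + 1 := by rw [hSdef]; simp only []; linarith
  have hha : dist (a i) (h • (a i)) ≤ C' i j := hC' i j h hhF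
  set x'' : X := h • (g • w.1) with hx''def
  set y'' : Y := h • (g • w.2) with hy''def
  have hx2 : dist (a i) x'' < T i j := by
    rw [hTdef]
    calc dist (a i) x'' ≤ dist (a i) (h • (a i)) + dist (h • (a i)) (h • (g • w.1)) :=
          dist_triangle _ _ _
      _ = dist (a i) (h • (a i)) + dist (a i) (g • w.1) := by rw [dist_smul]
      _ < C' i j + ε := by linarith
  have hy2 : dist (b j) y'' < ε := hh
  -- second X-net index
  have hin3 : OrbQuot.mk G x'' ∈ Metric.closedBall (OrbQuot.mk G (a i)) (T i j) := by
    rw [Metric.mem_closedBall]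
    calc dist (OrbQuot.mk G x'') (OrbQuot.mk G (a i)) ≤ dist x'' (a i) := dist_mk_le_dist G _ _
      _ ≤ T i j := by rw [dist_comm]; exact hx2.le
  obtain ⟨m, hmt, hm⟩ := Set.mem_iUnion₂.mp (htX2cov i j hin3)
  have hm' : orbDist G (a m) x'' < ε := by
    have h1 : dist (OrbQuot.mk G x'') (OrbQuot.mk G (a m)) < ε := by
      rw [show OrbQuot.mk G (a m) = m from Quotient.out_eq m]
      exact Metric.mem_ball.mp hm
    rw [OrbQuot.dist_mk, orbDist_comm] at h1
    exact h1
  obtain ⟨l, hl⟩ := exists_orbDist_lt G hm'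
  have hlG : l ∈ {l : G | dist (a m) (l • (a i)) < T i j + ε + 1} := by
    simp only [Set.mem_setOf_eq]
    calc dist (a m) (l • (a i)) ≤ dist (a m) (l • x'') + dist (l • x'') (l • (a i)) :=
          dist_triangle _ _ _
      _ = dist (a m) (l • x'') + dist x'' (a i) := by rw [dist_smul]
      _ < ε + T i j := by
          rw [dist_comm x'' (a i)]
          linarith
      _ ≤ T i j + ε + 1 := by linarith
  obtain ⟨u, hu, f, hf, u', hu', hluu⟩ := mem_sandwich_iff.mp (hFccov i j m hlG)
  have huX : dist (a m) (u • (a m)) < ε := by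
    calc dist (a m) (u • (a m)) ≤ dist ((a m, b j) : X × Y) (u • ((a m, b j) : X × Y)) := by
          rw [Prod.dist_eq]; exact le_sup_left
      _ < ε := hu
  have hu'Y : dist (b j) (u' • (b j)) < ε := by
    calc dist (b j) (u' • (b j)) ≤ dist ((a m, b j) : X × Y) (u' • ((a m, b j) : X × Y)) := by
          rw [Prod.dist_eq]; exact le_sup_right
      _ < ε := hu'
  -- assemble the distance estimate
  have hq1 : q = OrbQuot.mk G (l • (h • (g • w))) := by
    rw [OrbQuot.mk_smul, OrbQuot.mk_smul, OrbQuot.mk_smul, hmkw]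
  have hstep1 : dist q (OrbQuot.mk G ((a m, l • (b j)) : X × Y)) < ε := by
    rw [hq1]
    refine lt_of_le_of_lt (dist_mk_le_dist G _ _) ?_
    rw [Prod.dist_eq]
    apply max_lt
    · show dist (l • x'') (a m) < ε
      rw [dist_comm]
      exact hl
    · show dist (l • y'') (l • (b j)) < ε
      rw [dist_smul, dist_comm]
      exact hy2
  have hstep2 : dist (OrbQuot.mk G ((a m, l • (b j)) : X × Y))
      (OrbQuot.mk G ((a m, f • (b j)) : X × Y)) < ε := by
    rw [OrbQuot.dist_mk]
    refine lt_of_le_of_lt (orbDist_le G _ _ u) ?_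
    rw [Prod.dist_eq]
    apply max_lt
    · show dist (a m) (u • (a m)) < ε
      exact huX
    · show dist (l • (b j)) (u • (f • (b j))) < ε
      have hlb : l • (b j) = u • (f • (u' • (b j))) := by
        rw [← hluu, mul_smul, mul_smul]
      rw [hlb, dist_smul, dist_smul, dist_comm]
      exact hu'Y
  have hfinal : dist q (OrbQuot.mk G ((a m, f • (b j)) : X × Y)) < ε' := by
    have h3 := dist_triangle q (OrbQuot.mk G ((a m, l • (b j)) : X × Y))
      (OrbQuot.mk G ((a m, f • (b j)) : X × Y))
    have : dist q (OrbQuot.mk G ((a m, f • (b j)) : X × Y)) < 2*ε := by linarith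
    rw [hεdef] at this
    linarith
  -- membership in the net
  refine Set.mem_biUnion ?_ (Metric.mem_ball.mpr hfinal)
  refine Set.mem_biUnion hitX ?_
  refine Set.mem_biUnion hjtY ?_
  refine Set.mem_biUnion hmt ?_
  exact Set.mem_biUnion hf rfl

end MainTB

/-- For a Polish locally Roelcke precompact group acting continuously,
isometrically and coarsely properly on complete metric spaces `X` and `Y` with proper orbit
space quotients, the diagonal action on `X × Y` (with the supremum metric) is isometric,
continuous and coarsely proper, and `(X × Y) ⫽ G` is proper. -/
theorem statement2 (G X Y : Type*) [Group G] [TopologicalSpace G] [IsTopologicalGroup G]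
    [PolishSpace G] (hlRpc : LocallyRoelckePrecompact G)
    [MetricSpace X] [CompleteSpace X] [MulAction G X] [IsIsometricSMul G X] [ContinuousSMul G X]
    (hXcp : CoarselyProperSMul G X) (hXq : ProperSpace (OrbQuot G X))
    [MetricSpace Y] [CompleteSpace Y] [MulAction G Y] [IsIsometricSMul G Y] [ContinuousSMul G Y]
    (hYcp : CoarselyProperSMul G Y) (hYq : ProperSpace (OrbQuot G Y)) :
    (∀ g : G, Isometry fun p : X × Y => g • p) ∧
    Continuous (fun q : G × (X × Y) => q.1 • q.2) ∧
    CoarselyProperSMul G (X × Y) ∧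
    ProperSpace (OrbQuot G (X × Y)) := by
  constructor
  · exact fun g => isometry_smul (X × Y) g
  constructor
  · exact continuous_smul
  constructor
  · -- coarse properness of the diagonal action
    intro z r hr
    refine cb_subset' (hXcp z.1 r hr) ?_
    intro g hg
    simp only [Set.mem_setOf_eq] at hg ⊢
    calc dist z.1 (g • z.1) ≤ dist z (g • z) := by
          rw [Prod.dist_eq]; exact le_sup_left
      _ < r := hg
  · -- properness of the orbit space of the product
    haveI : CompleteSpace (OrbQuot G (X × Y)) := orbQuot_complete G
    constructor
    intro q₀ R
    refine isCompact_iff_totallyBounded_isComplete.mpr ⟨?_, ?_⟩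
    · refine TotallyBounded.subset
        (Metric.closedBall_subset_closedBall (le_max_left R 0)) ?_
      exact orbQuot_prod_totallyBounded hlRpc hXcp hXq hYcp hYq q₀ (max R 0)
        (le_max_right R 0)
    · exact Metric.isClosed_closedBall.isComplete
end

section
/- Let X be a complete metric space, let G be a Polish group acting continuously by isometries on X, let x ∈ X, and let G_x ≤ G denote the stabiliser of x. For a fixed n ∈ ℕ, the map ι_x : Xⁿ ⫽ G_x → X^{n+1} ⫽ G sending the G_x-orbit closure [y] of y ∈ Xⁿ to the G-orbit closure [(x, y)] of (x, y) ∈ X^{n+1} is well-defined, 1-Lipschitz, and maps unbounded subsets of Xⁿ ⫽ G_x to unbounded subsets of X^{n+1} ⫽ G; moreover, if the action G ↷ X is transitive, then ι_x is surjective. -/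
set_option linter.unusedSectionVars false

open Metric MulAction Filter Set Topology Pointwise

section AuxStmt5

variable {G : Type*} {X : Type*} [Group G] [MetricSpace X] [MulAction G X] [IsIsometricSMul G X]

theorem aux_cons_le (x : X) {n : ℕ} (y y' : Fin n → X) :
    orbDist G (Fin.cons x y : Fin (n + 1) → X) (Fin.cons x y')
      ≤ orbDist (MulAction.stabilizer G x) y y' := by
  refine le_ciInf fun g => ?_
  refine le_trans (orbDist_le G _ _ (g : G)) ?_
  have hr : (0:ℝ) ≤ dist y (g • y') := dist_nonneg
  refine (dist_pi_le_iff hr).2 fun i => ?_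
  refine Fin.cases ?_ (fun j => ?_) i
  · have hg : (g : G) • x = x := g.2
    simpa [Pi.smul_apply, hg] using hr
  · have := dist_le_pi_dist y (g • y') j
    simpa [Pi.smul_apply, Subgroup.smul_def] using this

theorem aux_cons_ge (x : X) {n : ℕ} (y : Fin n → X) :
    orbDist (MulAction.stabilizer G x) y (fun _ => x)
      ≤ 2 * orbDist G (Fin.cons x y : Fin (n + 1) → X)
          (Fin.cons x (fun _ => x) : Fin (n + 1) → X) := by
  set c : Fin n → X := fun _ => x with hc
  have h1 : orbDist (MulAction.stabilizer G x) y c ≤ dist y c := by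
    simpa using orbDist_le (MulAction.stabilizer G x) y c 1
  have h2 : ∀ g : G, dist y c / 2
      ≤ dist (Fin.cons x y : Fin (n + 1) → X) (g • (Fin.cons x c : Fin (n + 1) → X)) := by
    intro g
    set D := dist (Fin.cons x y : Fin (n + 1) → X) (g • (Fin.cons x c : Fin (n + 1) → X))
      with hD
    have hD0 : (0:ℝ) ≤ D := dist_nonneg
    have h0 : dist x (g • x) ≤ D := by
      have := dist_le_pi_dist (Fin.cons x y : Fin (n + 1) → X)
        (g • (Fin.cons x c : Fin (n + 1) → X)) 0
      simpa [Pi.smul_apply] using this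
    have hyc : dist y c ≤ 2 * D := by
      refine (dist_pi_le_iff (by linarith)).2 fun j => ?_
      have hj : dist (y j) (g • x) ≤ D := by
        have := dist_le_pi_dist (Fin.cons x y : Fin (n + 1) → X)
          (g • (Fin.cons x c : Fin (n + 1) → X)) j.succ
        simpa [Pi.smul_apply, hc] using this
      calc dist (y j) (c j) = dist (y j) x := by simp [hc]
        _ ≤ dist (y j) (g • x) + dist (g • x) x := dist_triangle _ _ _
        _ ≤ D + D := add_le_add hj (by rwa [dist_comm] at h0)
        _ = 2 * D := by ring
    linarith
  have h3 : dist y c / 2 ≤ orbDist G (Fin.cons x y : Fin (n + 1) → X)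
      (Fin.cons x c : Fin (n + 1) → X) := le_ciInf h2
  linarith

end AuxStmt5

/-- For a Polish group `G` acting continuously by isometries on a complete
metric space `X` and a point `x` with stabiliser `G_x`, the assignment `[y] ↦ [(x, y)]`
induces a well-defined `1`-Lipschitz map `ι_x : Xⁿ ⫽ G_x → X^{n+1} ⫽ G` that sends unbounded
sets to unbounded sets and is surjective when the action is transitive. -/
theorem statement5 (G : Type*) [Group G] [TopologicalSpace G] [IsTopologicalGroup G]
    [PolishSpace G] (X : Type*) [MetricSpace X] [CompleteSpace X] [MulAction G X]
    [IsIsometricSMul G X] [ContinuousSMul G X] (x : X) (n : ℕ) :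
    (∀ y y' : Fin n → X,
      OrbQuot.mk (MulAction.stabilizer G x) y = OrbQuot.mk (MulAction.stabilizer G x) y' →
      OrbQuot.mk G (Fin.cons x y : Fin (n + 1) → X) = OrbQuot.mk G (Fin.cons x y' : Fin (n + 1) → X)) ∧
    ∃ iota : OrbQuot (MulAction.stabilizer G x) (Fin n → X) → OrbQuot G (Fin (n + 1) → X),
      (∀ y : Fin n → X,
        iota (OrbQuot.mk (MulAction.stabilizer G x) y) = OrbQuot.mk G (Fin.cons x y : Fin (n + 1) → X)) ∧
      LipschitzWith 1 iota ∧
      (∀ S : Set (OrbQuot (MulAction.stabilizer G x) (Fin n → X)),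
        ¬ Bornology.IsBounded S → ¬ Bornology.IsBounded (iota '' S)) ∧
      (MulAction.IsPretransitive G X → Function.Surjective iota) := by
  -- well-definedness
  have hwd : ∀ y y' : Fin n → X,
      OrbQuot.mk (MulAction.stabilizer G x) y = OrbQuot.mk (MulAction.stabilizer G x) y' →
      OrbQuot.mk G (Fin.cons x y : Fin (n + 1) → X)
        = OrbQuot.mk G (Fin.cons x y' : Fin (n + 1) → X) := by
    intro y y' h
    have h0 : orbDist (MulAction.stabilizer G x) y y' = 0 := by
      have := OrbQuot.dist_mk (MulAction.stabilizer G x) y y'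
      rw [h] at this
      simpa using this.symm
    have h1 : orbDist G (Fin.cons x y : Fin (n + 1) → X) (Fin.cons x y') = 0 :=
      le_antisymm (by simpa [h0] using aux_cons_le (G := G) x y y') (orbDist_nonneg G _ _)
    exact Quotient.sound (closure_orbit_eq_of_orbDist_eq_zero G h1)
  refine ⟨hwd, ?_⟩
  refine ⟨Quotient.lift (fun y => OrbQuot.mk G (Fin.cons x y : Fin (n + 1) → X))
    (fun y y' h => hwd y y' (Quotient.sound h)), fun y => rfl, ?_, ?_, ?_⟩
  · -- Lipschitz
    refine LipschitzWith.of_dist_le_mul fun p q => ?_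
    obtain ⟨y, rfl⟩ := Quotient.exists_rep p
    obtain ⟨y', rfl⟩ := Quotient.exists_rep q
    have hpq : dist (⟦y⟧ : OrbQuot (MulAction.stabilizer G x) (Fin n → X)) ⟦y'⟧
        = orbDist (MulAction.stabilizer G x) y y' := OrbQuot.dist_mk _ y y'
    have hiq : dist (OrbQuot.mk G (Fin.cons x y : Fin (n + 1) → X))
        (OrbQuot.mk G (Fin.cons x y' : Fin (n + 1) → X))
        = orbDist G (Fin.cons x y : Fin (n + 1) → X) (Fin.cons x y') := OrbQuot.dist_mk _ _ _
    show dist (OrbQuot.mk G (Fin.cons x y : Fin (n + 1) → X))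
        (OrbQuot.mk G (Fin.cons x y' : Fin (n + 1) → X)) ≤ _
    rw [hiq]
    calc orbDist G (Fin.cons x y : Fin (n + 1) → X) (Fin.cons x y')
        ≤ orbDist (MulAction.stabilizer G x) y y' := aux_cons_le (G := G) x y y'
      _ = ((1 : NNReal) : ℝ) * dist (⟦y⟧ : OrbQuot (MulAction.stabilizer G x) (Fin n → X)) ⟦y'⟧ := by
          rw [hpq]; simp
  · -- unbounded to unbounded
    intro S hS hb
    apply hS
    set c₀ : OrbQuot (MulAction.stabilizer G x) (Fin n → X) :=
      OrbQuot.mk (MulAction.stabilizer G x) (fun _ => x) with hc₀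
    obtain ⟨r, hr⟩ := hb.subset_closedBall
      (OrbQuot.mk G (Fin.cons x (fun _ => x) : Fin (n + 1) → X))
    refine (Metric.isBounded_closedBall :
      Bornology.IsBounded (Metric.closedBall c₀ (2 * r))).subset fun p hp => ?_
    obtain ⟨y, rfl⟩ := Quotient.exists_rep p
    have hmem : OrbQuot.mk G (Fin.cons x y : Fin (n + 1) → X)
        ∈ Metric.closedBall (OrbQuot.mk G (Fin.cons x (fun _ => x) : Fin (n + 1) → X)) r :=
      hr ⟨⟦y⟧, hp, rfl⟩
    have hle : dist (OrbQuot.mk G (Fin.cons x y : Fin (n + 1) → X))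
        (OrbQuot.mk G (Fin.cons x (fun _ => x) : Fin (n + 1) → X)) ≤ r :=
      Metric.mem_closedBall.1 hmem
    rw [OrbQuot.dist_mk] at hle
    have h1 : dist (⟦y⟧ : OrbQuot (MulAction.stabilizer G x) (Fin n → X)) c₀
        = orbDist (MulAction.stabilizer G x) y (fun _ => x) := OrbQuot.dist_mk _ _ _
    have h2 := aux_cons_ge (G := G) x y
    refine Metric.mem_closedBall.2 ?_
    rw [h1]
    linarith
  · -- surjectivity
    intro htrans q
    obtain ⟨z, rfl⟩ := Quotient.exists_rep q
    obtain ⟨g, hg⟩ := htrans.exists_smul_eq (z 0) x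
    refine ⟨OrbQuot.mk (MulAction.stabilizer G x) (Fin.tail (g • z)), ?_⟩
    have hcons : (Fin.cons x (Fin.tail (g • z)) : Fin (n + 1) → X) = g • z := by
      have : (g • z) 0 = x := hg
      rw [← this]
      exact Fin.cons_self_tail (g • z)
    show OrbQuot.mk G (Fin.cons x (Fin.tail (g • z)) : Fin (n + 1) → X) = ⟦z⟧
    rw [hcons]
    exact Quotient.sound (show closure (MulAction.orbit G (g • z)) = closure (MulAction.orbit G z)
      by rw [MulAction.orbit_smul])
end

section
/- Let A be a set and let d : A × A → [0, ∞] be a symmetric function with d(x, y) = 0 if and only if x = y. Then d satisfies the triangle inequality d(x, z) ≤ d(x, y) + d(y, z) (in [0, ∞], i.e., d is a generalised metric) if and only if the function d' = 1 − e^{−d} (with the convention e^{−∞} = 0) is a [0, 1]-valued metric on A satisfying the stronger triangle inequality d'(x, z) ≤ d'(x, y) + d'(y, z) − d'(x, y)·d'(y, z) for all x, y, z ∈ A. -/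
set_option linter.unusedSectionVars false

open Metric MulAction Filter Set Topology Pointwise

/-- The transform `d' = 1 - exp (-d)` of a `[0, ∞]`-valued distance, with `exp (-∞) = 0`. -/
noncomputable def dualDist {A : Type*} (d : A → A → ENNReal) (x y : A) : ℝ :=
  if d x y = ⊤ then 1 else 1 - Real.exp (-(d x y).toReal)

noncomputable def fE (a : ENNReal) : ℝ :=
  if a = ⊤ then 1 else 1 - Real.exp (-a.toReal)

lemma dualDist_eq_fE {A : Type*} (d : A → A → ENNReal) (x y : A) :
    dualDist d x y = fE (d x y) := rfl

lemma fE_nonneg (a : ENNReal) : 0 ≤ fE a := by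
  unfold fE
  split
  · norm_num
  · have : Real.exp (-a.toReal) ≤ 1 := by
      rw [Real.exp_le_one_iff]
      simp [ENNReal.toReal_nonneg]
    linarith

lemma fE_le_one (a : ENNReal) : fE a ≤ 1 := by
  unfold fE
  split
  · exact le_rfl
  · have := Real.exp_pos (-a.toReal)
    linarith

lemma fE_le_iff {a b : ENNReal} : fE a ≤ fE b ↔ a ≤ b := by
  unfold fE
  rcases eq_or_ne b ⊤ with hb | hb
  · simp [hb, fE_le_one, le_top]
    split
    · norm_num
    · have := Real.exp_pos (-a.toReal); linarith
  rcases eq_or_ne a ⊤ with ha | ha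
  · simp only [ha, hb, if_true, if_false]
    constructor
    · intro h
      have := Real.exp_pos (-b.toReal); linarith
    · intro h
      exact absurd (top_le_iff.mp h) hb
  · simp only [ha, hb, if_false]
    rw [sub_le_sub_iff_left, Real.exp_le_exp, neg_le_neg_iff,
      ENNReal.toReal_le_toReal ha hb]

lemma fE_eq_zero {a : ENNReal} : fE a = 0 ↔ a = 0 := by
  unfold fE
  rcases eq_or_ne a ⊤ with ha | ha
  · simp [ha]
  · simp only [ha, if_false, sub_eq_zero]
    rw [eq_comm, Real.exp_eq_one_iff, neg_eq_zero]
    rw [ENNReal.toReal_eq_zero_iff]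
    simp [ha]

lemma fE_add (a b : ENNReal) : fE (a + b) = fE a + fE b - fE a * fE b := by
  rcases eq_or_ne a ⊤ with ha | ha
  · simp [fE, ha]
  rcases eq_or_ne b ⊤ with hb | hb
  · simp [fE, hb, ENNReal.add_eq_top]
  · have hab : a + b ≠ ⊤ := ENNReal.add_ne_top.mpr ⟨ha, hb⟩
    simp only [fE, ha, hb, hab, if_false]
    rw [ENNReal.toReal_add ha hb, neg_add, Real.exp_add]
    ring

/-- A symmetric `[0, ∞]`-valued function vanishing exactly on the diagonal
satisfies the triangle inequality (i.e. is a generalised metric) if and only if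
`d' = 1 - exp (-d)` is a `[0, 1]`-valued metric satisfying the stronger triangle inequality
`d'(x, z) ≤ d'(x, y) + d'(y, z) - d'(x, y) * d'(y, z)`. -/
theorem statement8 {A : Type*} (d : A → A → ENNReal)
    (hsymm : ∀ x y, d x y = d y x) (hzero : ∀ x y, d x y = 0 ↔ x = y) :
    (∀ x y z, d x z ≤ d x y + d y z) ↔
    (∀ x y, 0 ≤ dualDist d x y ∧ dualDist d x y ≤ 1) ∧
    (∀ x y, dualDist d x y = dualDist d y x) ∧
    (∀ x y, dualDist d x y = 0 ↔ x = y) ∧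
    (∀ x y z, dualDist d x z ≤ dualDist d x y + dualDist d y z) ∧
    (∀ x y z, dualDist d x z ≤
      dualDist d x y + dualDist d y z - dualDist d x y * dualDist d y z) := by
  simp only [dualDist_eq_fE]
  constructor
  · intro htri
    refine ⟨fun x y => ⟨fE_nonneg _, fE_le_one _⟩, fun x y => by rw [hsymm],
      fun x y => by rw [fE_eq_zero, hzero], ?_, ?_⟩
    · intro x y z
      have h := fE_le_iff.mpr (htri x y z)
      rw [fE_add] at h
      have := mul_nonneg (fE_nonneg (d x y)) (fE_nonneg (d y z))
      linarith
    · intro x y z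
      have h := fE_le_iff.mpr (htri x y z)
      rwa [fE_add] at h
  · rintro ⟨-, -, -, -, hstrong⟩ x y z
    have h := hstrong x y z
    rw [← fE_add] at h
    exact fE_le_iff.mp h
end

section
/- Let G be a group with an unbounded left-invariant pseudometric d_L, acting on a set X, let n ≥ 1, let K be a Hausdorff topological space, and let P : Xⁿ → K be properly G-invariant. Then for every equivalence relation ∼ on {0, …, n−1} there exists a sequence (g^k)_k in G^{n/∼} with g^k ⇝ ∞, and for every x ∈ Xⁿ the limit lim_k P(g^k·x) exists and is independent of the choice of the sequence (g^k)_k with g^k ⇝ ∞. -/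
set_option linter.unusedSectionVars false

open Metric MulAction Filter Set Topology Pointwise

section ProperInvariance

/-- A left-invariant pseudometric on a group. -/
structure IsLeftInvPseudoMetric (G : Type*) [Group G] (dL : G → G → ℝ) : Prop where
  refl : ∀ x, dL x x = 0
  symm : ∀ x y, dL x y = dL y x
  triangle : ∀ x y z, dL x z ≤ dL x y + dL y z
  left_invariant : ∀ g x y, dL (g * x) (g * y) = dL x y

/-- A sequence of tuples of group elements, indexed by the classes of an equivalence relation
`s` on `Fin n`, *goes to infinity* if the distances between the entries at any two distinct
classes tend to infinity. -/
def SeqToInfty {G : Type*} (dL : G → G → ℝ) {n : ℕ} (s : Setoid (Fin n))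
    (gk : ℕ → Quotient s → G) : Prop :=
  ∀ I J : Quotient s, I ≠ J →
    Filter.Tendsto (fun k => dL (gk k I) (gk k J)) Filter.atTop Filter.atTop

/-- The action of a tuple of group elements indexed by the classes of `s` on a tuple in `Xⁿ`:
each coordinate is acted on by the element indexed by its class. -/
def smulClasses {G X : Type*} [SMul G X] {n : ℕ} (s : Setoid (Fin n)) (g : Quotient s → G)
    (x : Fin n → X) : Fin n → X :=
  fun i => g (Quotient.mk s i) • x i

/-- A map `P : Xⁿ → K` is *properly `G`-invariant* if for every equivalence relation `s` on the
index set, every tuple `x` and every sequence of class-indexed tuples of group elements going to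
infinity, the corresponding sequence of values of `P` converges. -/
def ProperlyInvariant {G X : Type*} [SMul G X] (dL : G → G → ℝ) {n : ℕ} (K : Type*)
    [TopologicalSpace K] (P : (Fin n → X) → K) : Prop :=
  ∀ (s : Setoid (Fin n)) (gk : ℕ → Quotient s → G) (x : Fin n → X),
    SeqToInfty dL s gk →
    ∃ L : K, Filter.Tendsto (fun k => P (smulClasses s (gk k) x)) Filter.atTop (nhds L)

/-- A left-invariant pseudometric on `G` is *coarsely compatible* with an isometric action of
`G` on a metric space `X` if a sequence of pairs of group elements diverges exactly when the
distances between the corresponding translates of a point diverge. -/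
def CoarselyCompatible {G : Type*} (X : Type*) [SMul G X] [PseudoMetricSpace X]
    (dL : G → G → ℝ) : Prop :=
  ∀ (g h : ℕ → G) (x : X),
    Filter.Tendsto (fun k => dL (g k) (h k)) Filter.atTop Filter.atTop ↔
    Filter.Tendsto (fun k => dist (g k • x) (h k • x)) Filter.atTop Filter.atTop

end ProperInvariance

/-- Auxiliary: one can find arbitrarily many pairwise far-apart elements. -/
lemma exists_far_tuple {G : Type*} [Group G] (dL : G → G → ℝ)
    (hdL : IsLeftInvPseudoMetric G dL) (hunbdd : ∀ C : ℝ, ∃ g : G, C < dL 1 g)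
    (C : ℝ) (m : ℕ) : ∃ f : Fin m → G, ∀ i j : Fin m, i ≠ j → C ≤ dL (f i) (f j) := by
  induction m with
  | zero => exact ⟨fun i => 1, fun i => i.elim0⟩
  | succ m ih =>
    obtain ⟨f, hf⟩ := ih
    obtain ⟨B, hB⟩ := Finite.exists_le (fun i : Fin m => dL 1 (f i))
    obtain ⟨g, hg⟩ := hunbdd (C + B)
    have hfar : ∀ i : Fin m, C ≤ dL g (f i) := by
      intro i
      have h1 := hdL.triangle 1 (f i) g
      have h2 := hdL.symm g (f i)
      have := hB i
      linarith
    refine ⟨Fin.cons g f, ?_⟩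
    intro i j hij
    rcases Fin.eq_zero_or_eq_succ i with rfl | ⟨i', rfl⟩ <;>
      rcases Fin.eq_zero_or_eq_succ j with rfl | ⟨j', rfl⟩
    · exact absurd rfl hij
    · simpa using hfar j'
    · have := hfar i'
      rw [hdL.symm] at this
      simpa using this
    · have hne : i' ≠ j' := fun h => hij (by rw [h])
      simpa using hf i' j' hne

/-- If `dL` is an unbounded left-invariant pseudometric on a group `G` acting
on a set `X`, `n ≥ 1`, `K` is Hausdorff and `P : Xⁿ → K` is properly `G`-invariant, then for
every equivalence relation on the index set there are sequences going to infinity, and for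
every tuple `x` the limit of `P` along any such sequence exists and does not depend on the
sequence. -/
theorem statement12 (G X K : Type*) [Group G] [MulAction G X] [TopologicalSpace K]
    [T2Space K] (dL : G → G → ℝ) (hdL : IsLeftInvPseudoMetric G dL)
    (hunbdd : ∀ C : ℝ, ∃ g : G, C < dL 1 g)
    (n : ℕ) (hn : 1 ≤ n) (P : (Fin n → X) → K) (hP : ProperlyInvariant dL K P) :
    (∀ s : Setoid (Fin n), ∃ gk : ℕ → Quotient s → G, SeqToInfty dL s gk) ∧
    (∀ (s : Setoid (Fin n)) (x : Fin n → X), ∃ L : K,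
      ∀ gk : ℕ → Quotient s → G, SeqToInfty dL s gk →
        Filter.Tendsto (fun k => P (smulClasses s (gk k) x)) Filter.atTop (nhds L)) := by
  have key : ∀ s : Setoid (Fin n), ∃ gk : ℕ → Quotient s → G, SeqToInfty dL s gk := by
    intro s
    choose f hf using fun k : ℕ => exists_far_tuple dL hdL hunbdd (k : ℝ) n
    refine ⟨fun k I => f k I.out, ?_⟩
    intro I J hIJ
    have hne : I.out ≠ J.out := fun h => hIJ (by
      rw [← Quotient.out_eq I, ← Quotient.out_eq J, h])
    have hout : ∀ k : ℕ, (k : ℝ) ≤ dL (f k I.out) (f k J.out) :=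
      fun k => hf k _ _ hne
    exact tendsto_atTop_mono hout tendsto_natCast_atTop_atTop
  refine ⟨key, ?_⟩
  intro s x
  obtain ⟨g0, hg0⟩ := key s
  obtain ⟨L, hL⟩ := hP s g0 x hg0
  refine ⟨L, ?_⟩
  intro gk hgk
  set h : ℕ → Quotient s → G := fun k => if Even k then g0 (k / 2) else gk (k / 2) with hdef
  have hh : SeqToInfty dL s h := by
    intro I J hIJ
    rw [Filter.tendsto_atTop]
    intro C
    obtain ⟨N1, h1⟩ := eventually_atTop.1 ((hg0 I J hIJ).eventually_ge_atTop C)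
    obtain ⟨N2, h2⟩ := eventually_atTop.1 ((hgk I J hIJ).eventually_ge_atTop C)
    filter_upwards [eventually_ge_atTop (2 * (N1 + N2))] with k hk
    by_cases he : Even k
    · simp only [hdef, if_pos he]
      exact h1 _ (by omega)
    · simp only [hdef, if_neg he]
      exact h2 _ (by omega)
  obtain ⟨L', hL'⟩ := hP s h x hh
  have h2m : Filter.Tendsto (fun m : ℕ => 2 * m) atTop atTop :=
    tendsto_atTop_atTop.2 fun b => ⟨b, fun a ha => by omega⟩
  have h2m1 : Filter.Tendsto (fun m : ℕ => 2 * m + 1) atTop atTop :=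
    tendsto_atTop_atTop.2 fun b => ⟨b, fun a ha => by omega⟩
  have hev : Filter.Tendsto (fun m => P (smulClasses s (g0 m) x)) atTop (nhds L') := by
    have hc := hL'.comp h2m
    have heq : (fun m => P (smulClasses s (h (2 * m)) x))
        = fun m => P (smulClasses s (g0 m) x) := by
      funext m
      have hd : 2 * m / 2 = m := by omega
      simp only [hdef]
      rw [if_pos ⟨m, two_mul m⟩, hd]
    rw [← heq]
    exact hc
  have hLL' : L' = L := tendsto_nhds_unique hev hL
  have hodd : Filter.Tendsto (fun m => P (smulClasses s (gk m) x)) atTop (nhds L') := by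
    have hc := hL'.comp h2m1
    have heq : (fun m => P (smulClasses s (h (2 * m + 1)) x))
        = fun m => P (smulClasses s (gk m) x) := by
      funext m
      have hd : (2 * m + 1) / 2 = m := by omega
      have hne : ¬ Even (2 * m + 1) := by rw [Nat.even_iff]; omega
      simp only [hdef]
      rw [if_neg hne, hd]
    rw [← heq]
    exact hc
  rwa [hLL'] at hodd
end
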